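/- arXiv:2502.10551 — 8 statements merged into one kernel-verified Lean document; each statement's English description precedes it below -/
import Mathlib

section
/- Let V ∈ [0,∞). Suppose p is a mixed Hider strategy such that u(p,ξ) ≥ V for every sequence ξ, and θ is a mixed Searcher strategy such that u(j,θ) ≤ V for every box j ∈ {1,…,n}. Then p has full support: p_j > 0 for every j ∈ {1,…,n}. -/
open scoped ENNReal

/-- `looks ξ j k` = number of looks in box `j` among the first `k` looks of `ξ`. -/
def looks {n : ℕ} (ξ : ℕ → Fin n) (j : Fin n) (k : ℕ) : ℕ :=
  ((Finset.range k).filter (fun i => ξ i = j)).card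

/-- Expected search time (in `[0,∞]`) to find a target hidden in box `j`, when the boxes
have search times `t` and detection probabilities `q`, and the Searcher uses the
sequence `ξ`. -/
noncomputable def searchTime {n : ℕ} (t q : Fin n → ℝ) (j : Fin n) (ξ : ℕ → Fin n) : ℝ≥0∞ :=
  ∑' k : ℕ, ENNReal.ofReal (t (ξ k) * (1 - q j) ^ looks ξ j k)

/-- Expected search time against the mixed Hider strategy `p`. -/
noncomputable def mixedSearchTime {n : ℕ} (t q : Fin n → ℝ) (p : Fin n → ℝ)
    (ξ : ℕ → Fin n) : ℝ≥0∞ :=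
  ∑ j : Fin n, ENNReal.ofReal (p j) * searchTime t q j ξ

private lemma tsum_split (f : ℕ → ℝ≥0∞) (k0 : ℕ) :
    ∑' k, f k = ∑ k ∈ Finset.range k0, f k + ∑' k, f (k + k0) := by
  induction k0 with
  | zero => simp
  | succ m ih =>
      rw [ih, Finset.sum_range_succ]
      have h : ∑' k, f (k + m) = f m + ∑' k, f (k + (m + 1)) := by
        rw [tsum_eq_zero_add' ENNReal.summable]
        simp only [zero_add]
        congr 1
        exact tsum_congr fun k => by congr 1; omega
      rw [h, add_assoc]

private lemma looks_succ {n : ℕ} (ξ : ℕ → Fin n) (j : Fin n) (k : ℕ) :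
    looks ξ j (k + 1) = looks ξ j k + (if ξ k = j then 1 else 0) := by
  unfold looks
  rw [Finset.range_add_one, Finset.filter_insert]
  split
  · rw [Finset.card_insert_of_notMem (by simp)]
  · rw [add_zero]

private lemma looks_mono {n : ℕ} (ξ : ℕ → Fin n) (j : Fin n) {a b : ℕ} (h : a ≤ b) :
    looks ξ j a ≤ looks ξ j b :=
  Finset.card_le_card (Finset.filter_subset_filter _ (Finset.range_subset_range.2 h))

private lemma looks_congr {n : ℕ} {ξ ξ' : ℕ → Fin n} (j : Fin n) {k : ℕ}
    (h : ∀ m < k, ξ m = ξ' m) : looks ξ j k = looks ξ' j k := by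
  unfold looks
  congr 1
  apply Finset.filter_congr
  intro m hm
  simp only [Finset.mem_range] at hm
  simp [h m hm]

private lemma searchTime_delete {n : ℕ} (t q : Fin n → ℝ) {i j0 : Fin n} (hij : i ≠ j0)
    (ξ : ℕ → Fin n) (k0 : ℕ) (hk0 : ξ k0 = j0) :
    searchTime t q i ξ =
      searchTime t q i (fun k => if k < k0 then ξ k else ξ (k + 1))
        + ENNReal.ofReal (t j0 * (1 - q i) ^ looks ξ i k0) := by
  set ξ' : ℕ → Fin n := fun k => if k < k0 then ξ k else ξ (k + 1) with hξ'
  have hagree : ∀ m < k0, ξ m = ξ' m := fun m hm => by simp [hξ', hm]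
  have hlooks_le : ∀ k ≤ k0, looks ξ i k = looks ξ' i k := by
    intro k hk
    exact looks_congr i (fun m hm => hagree m (lt_of_lt_of_le hm hk))
  have hlooks_ge : ∀ k : ℕ, looks ξ' i (k + k0) = looks ξ i (k + k0 + 1) := by
    intro k
    induction k with
    | zero =>
        simp only [zero_add]
        rw [← hlooks_le k0 le_rfl, looks_succ, hk0, if_neg (fun h => hij h.symm), add_zero]
    | succ m ih =>
        rw [show m + 1 + k0 = (m + k0) + 1 from by omega, looks_succ, looks_succ, ih]
        congr 1
        have : ξ' (m + k0) = ξ (m + k0 + 1) := by simp [hξ']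
        rw [this]
  unfold searchTime
  rw [tsum_split (fun k => ENNReal.ofReal (t (ξ k) * (1 - q i) ^ looks ξ i k)) (k0 + 1),
    tsum_split (fun k => ENNReal.ofReal (t (ξ' k) * (1 - q i) ^ looks ξ' i k)) k0,
    Finset.sum_range_succ]
  have hhead : ∑ k ∈ Finset.range k0, ENNReal.ofReal (t (ξ k) * (1 - q i) ^ looks ξ i k)
      = ∑ k ∈ Finset.range k0, ENNReal.ofReal (t (ξ' k) * (1 - q i) ^ looks ξ' i k) := by
    apply Finset.sum_congr rfl
    intro k hk
    simp only [Finset.mem_range] at hk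
    rw [hagree k hk, hlooks_le k hk.le]
  have htail : ∀ k : ℕ, ENNReal.ofReal (t (ξ (k + (k0 + 1))) * (1 - q i) ^ looks ξ i (k + (k0 + 1)))
      = ENNReal.ofReal (t (ξ' (k + k0)) * (1 - q i) ^ looks ξ' i (k + k0)) := by
    intro k
    have e : k + (k0 + 1) = k + k0 + 1 := by omega
    have hx : ξ' (k + k0) = ξ (k + k0 + 1) := by simp [hξ']
    rw [e, hx, hlooks_ge k]
  rw [hhead, tsum_congr htail, hk0]
  ring

private lemma key {n : ℕ} (t q : Fin n → ℝ) (ht : ∀ j, 0 < t j) (hq1 : ∀ j, q j ≤ 1)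
    (V : ℝ≥0∞) (hV : V ≠ ⊤)
    (p : Fin n → ℝ) (hp0 : ∀ j, 0 ≤ p j) (hp1 : ∑ j, p j = 1)
    (hpV : ∀ ξ : ℕ → Fin n, V ≤ mixedSearchTime t q p ξ)
    {j0 : Fin n} (hj0 : p j0 = 0) (ξ0 : ℕ → Fin n)
    (hmix : mixedSearchTime t q p ξ0 = V)
    (hfin : searchTime t q j0 ξ0 ≠ ⊤) :
    V + ENNReal.ofReal (t j0) ≤ searchTime t q j0 ξ0 := by
  have hex : ∃ k, ξ0 k = j0 := by
    by_contra hcon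
    push_neg at hcon
    apply hfin
    have hlooks : ∀ k, looks ξ0 j0 k = 0 := by
      intro k
      unfold looks
      rw [Finset.card_eq_zero, Finset.filter_eq_empty_iff]
      intro m _
      exact hcon m
    have heq : searchTime t q j0 ξ0 = ∑' k : ℕ, ENNReal.ofReal (t (ξ0 k)) := by
      unfold searchTime; exact tsum_congr fun k => by rw [hlooks, pow_zero, mul_one]
    rw [heq]
    have hne : (Finset.univ : Finset (Fin n)).Nonempty := ⟨j0, Finset.mem_univ j0⟩
    set c := Finset.univ.inf' hne t with hcdef
    have hc0 : 0 < c := (Finset.lt_inf'_iff hne).2 fun i _ => ht i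
    have hb : ∀ k : ℕ, ENNReal.ofReal c ≤ ENNReal.ofReal (t (ξ0 k)) :=
      fun k => ENNReal.ofReal_le_ofReal (Finset.inf'_le t (Finset.mem_univ _))
    have htop : (⊤ : ℝ≥0∞) ≤ ∑' k : ℕ, ENNReal.ofReal (t (ξ0 k)) := by
      refine le_trans (le_of_eq ?_) (ENNReal.tsum_le_tsum hb)
      exact (ENNReal.tsum_const_eq_top_of_ne_zero
        (by simp only [ne_eq, ENNReal.ofReal_eq_zero, not_le]; exact hc0)).symm
    exact top_le_iff.1 htop
  set k0 := Nat.find hex with hk0def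
  have hk0 : ξ0 k0 = j0 := Nat.find_spec hex
  have hmin : ∀ m, m < k0 → ξ0 m ≠ j0 := fun m hm => Nat.find_min hex hm
  have hlooks0 : ∀ k, k ≤ k0 → looks ξ0 j0 k = 0 := by
    intro k hk
    unfold looks
    rw [Finset.card_eq_zero, Finset.filter_eq_empty_iff]
    intro m hm
    exact hmin m (lt_of_lt_of_le (Finset.mem_range.1 hm) hk)
  set S := ∑ k ∈ Finset.range k0, ENNReal.ofReal (t (ξ0 k)) with hS
  set ξ' : ℕ → Fin n := fun k => if k < k0 then ξ0 k else ξ0 (k + 1) with hξ'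
  set D := ∑ i : Fin n, ENNReal.ofReal (p i) *
      ENNReal.ofReal (t j0 * (1 - q i) ^ looks ξ0 i k0) with hD
  have hsplit : mixedSearchTime t q p ξ0 = mixedSearchTime t q p ξ' + D := by
    unfold mixedSearchTime
    rw [hD, ← Finset.sum_add_distrib]
    apply Finset.sum_congr rfl
    intro i _
    by_cases hi : i = j0
    · subst hi; simp [hj0]
    · rw [searchTime_delete t q hi ξ0 k0 hk0, mul_add]
  have hle' : mixedSearchTime t q p ξ' ≤ V := by rw [← hmix, hsplit]; exact le_self_add
  have hm' : mixedSearchTime t q p ξ' = V := le_antisymm hle' (hpV ξ')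
  have hD0 : D = 0 := by
    have h1 : V + D = V + 0 := by
      rw [add_zero]
      conv_lhs => rw [← hm', ← hsplit, hmix]
    exact (ENNReal.add_right_inj hV).1 h1
  have hkey : ∀ i : Fin n, 0 < p i → (1 - q i = 0 ∧ looks ξ0 i k0 ≠ 0) := by
    intro i hpi
    have hzero := (Finset.sum_eq_zero_iff.1 hD0.symm.symm) i (Finset.mem_univ i)
    rcases mul_eq_zero.1 hzero with h | h
    · exact absurd (ENNReal.ofReal_eq_zero.1 h) (by linarith)
    · have h2 : t j0 * (1 - q i) ^ looks ξ0 i k0 ≤ 0 := ENNReal.ofReal_eq_zero.1 h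
      have h3 : (1 - q i) ^ looks ξ0 i k0 ≤ 0 := by
        by_contra h3
        push_neg at h3
        nlinarith [mul_pos (ht j0) h3]
      have h4 : 0 ≤ (1 - q i) ^ looks ξ0 i k0 := pow_nonneg (by linarith [hq1 i]) _
      exact pow_eq_zero_iff'.1 (le_antisymm h3 h4)
  have hbound : ∀ i : Fin n, 0 < p i → searchTime t q i ξ0 ≤ S := by
    intro i hpi
    obtain ⟨hr, hL⟩ := hkey i hpi
    unfold searchTime
    rw [tsum_split (fun k => ENNReal.ofReal (t (ξ0 k) * (1 - q i) ^ looks ξ0 i k)) k0]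
    have htail : ∀ k : ℕ,
        ENNReal.ofReal (t (ξ0 (k + k0)) * (1 - q i) ^ looks ξ0 i (k + k0)) = 0 := by
      intro k
      have h1 : looks ξ0 i (k + k0) ≠ 0 :=
        fun h => hL (Nat.le_zero.1 (h ▸ looks_mono ξ0 i (Nat.le_add_left k0 k)))
      rw [hr, zero_pow h1, mul_zero, ENNReal.ofReal_zero]
    rw [tsum_congr htail, tsum_zero, add_zero, hS]
    apply Finset.sum_le_sum
    intro k _
    apply ENNReal.ofReal_le_ofReal
    rw [hr]
    rcases Nat.eq_zero_or_pos (looks ξ0 i k) with h | h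
    · rw [h, pow_zero, mul_one]
    · rw [zero_pow h.ne', mul_zero]; exact (ht _).le
  have hVS : V ≤ S := by
    calc V = mixedSearchTime t q p ξ0 := hmix.symm
    _ ≤ ∑ i : Fin n, ENNReal.ofReal (p i) * S := by
        unfold mixedSearchTime
        apply Finset.sum_le_sum
        intro i _
        rcases eq_or_lt_of_le (hp0 i) with h | h
        · rw [← h]; simp
        · exact mul_le_mul_right (hbound i h) _
    _ = S := by
        rw [← Finset.sum_mul, ← ENNReal.ofReal_sum_of_nonneg (fun i _ => hp0 i), hp1,
          ENNReal.ofReal_one, one_mul]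
  have h9 : S + ENNReal.ofReal (t j0) ≤ searchTime t q j0 ξ0 := by
    unfold searchTime
    refine le_trans ?_ (ENNReal.sum_le_tsum (Finset.range (k0 + 1)))
    rw [Finset.sum_range_succ]
    apply add_le_add
    · rw [hS]
      apply le_of_eq
      apply Finset.sum_congr rfl
      intro k hk
      rw [hlooks0 k (le_of_lt (Finset.mem_range.1 hk)), pow_zero, mul_one]
    · rw [hlooks0 k0 le_rfl, pow_zero, mul_one, hk0]
  calc V + ENNReal.ofReal (t j0) ≤ S + ENNReal.ofReal (t j0) := add_le_add_left hVS _
  _ ≤ _ := h9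

/-- if the mixed Hider strategy `p` guarantees expected search time at least
`V` against every Searcher sequence, and the mixed Searcher strategy `θ` guarantees
expected search time at most `V < ∞` against every box, then `p` has full support. -/
theorem hider_guarantee_full_support
    {n : ℕ} (t q : Fin n → ℝ) (ht : ∀ j, 0 < t j) (hq0 : ∀ j, 0 < q j) (hq1 : ∀ j, q j ≤ 1)
    (V : ℝ≥0∞) (hV : V ≠ ⊤)
    (p : Fin n → ℝ) (hp0 : ∀ j, 0 ≤ p j) (hp1 : ∑ j, p j = 1)
    (hpV : ∀ ξ : ℕ → Fin n, V ≤ mixedSearchTime t q p ξ)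
    (θ : (ℕ → Fin n) → ℝ) (hθ0 : ∀ ξ, 0 ≤ θ ξ) (hθle : ∀ ξ, θ ξ ≤ 1)
    (hθc : (Function.support θ).Countable)
    (hθ1 : ∑' ξ : ℕ → Fin n, ENNReal.ofReal (θ ξ) = 1)
    (hθV : ∀ j : Fin n, ∑' ξ : ℕ → Fin n, ENNReal.ofReal (θ ξ) * searchTime t q j ξ ≤ V) :
    ∀ j : Fin n, 0 < p j := by
  intro j0
  by_contra hc
  have hj0 : p j0 = 0 := le_antisymm (not_lt.1 hc) (hp0 j0)
  have hA : ∑' ξ : ℕ → Fin n, ENNReal.ofReal (θ ξ) * mixedSearchTime t q p ξ ≤ V := by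
    have h1 : ∀ ξ : ℕ → Fin n, ENNReal.ofReal (θ ξ) * mixedSearchTime t q p ξ
        = ∑ i : Fin n, ENNReal.ofReal (p i) * (ENNReal.ofReal (θ ξ) * searchTime t q i ξ) := by
      intro ξ
      unfold mixedSearchTime
      rw [Finset.mul_sum]
      exact Finset.sum_congr rfl fun i _ => by ring
    calc ∑' ξ : ℕ → Fin n, ENNReal.ofReal (θ ξ) * mixedSearchTime t q p ξ
        = ∑' ξ : ℕ → Fin n, ∑ i : Fin n,
            ENNReal.ofReal (p i) * (ENNReal.ofReal (θ ξ) * searchTime t q i ξ) := tsum_congr h1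
      _ = ∑ i : Fin n, ∑' ξ : ℕ → Fin n,
            ENNReal.ofReal (p i) * (ENNReal.ofReal (θ ξ) * searchTime t q i ξ) :=
          Summable.tsum_finsetSum (fun i _ => ENNReal.summable)
      _ = ∑ i : Fin n, ENNReal.ofReal (p i) *
            ∑' ξ : ℕ → Fin n, ENNReal.ofReal (θ ξ) * searchTime t q i ξ :=
          Finset.sum_congr rfl fun i _ => ENNReal.tsum_mul_left
      _ ≤ ∑ i : Fin n, ENNReal.ofReal (p i) * V :=
          Finset.sum_le_sum fun i _ => mul_le_mul_right (hθV i) _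
      _ = V := by
          rw [← Finset.sum_mul, ← ENNReal.ofReal_sum_of_nonneg (fun i _ => hp0 i), hp1,
            ENNReal.ofReal_one, one_mul]
  have hB : ∑' ξ : ℕ → Fin n, ENNReal.ofReal (θ ξ) * V = V := by
    rw [ENNReal.tsum_mul_right, hθ1, one_mul]
  have hC : ∀ ξ : ℕ → Fin n,
      ENNReal.ofReal (θ ξ) * V ≤ ENNReal.ofReal (θ ξ) * mixedSearchTime t q p ξ :=
    fun ξ => mul_le_mul_right (hpV ξ) _
  have hEq : ∀ ξ : ℕ → Fin n,
      ENNReal.ofReal (θ ξ) * V = ENNReal.ofReal (θ ξ) * mixedSearchTime t q p ξ := by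
    by_contra hcon
    push_neg at hcon
    obtain ⟨ξ1, hξ1⟩ := hcon
    have hlt := lt_of_le_of_ne (hC ξ1) hξ1
    have hlt2 := ENNReal.tsum_lt_tsum (i := ξ1) (by rw [hB]; exact hV) hC hlt
    rw [hB] at hlt2
    exact absurd hA (not_le.2 hlt2)
  have hmain : ∀ ξ : ℕ → Fin n, θ ξ ≠ 0 →
      ENNReal.ofReal (θ ξ) * (V + ENNReal.ofReal (t j0))
        ≤ ENNReal.ofReal (θ ξ) * searchTime t q j0 ξ := by
    intro ξ hθξ
    have hW0 : ENNReal.ofReal (θ ξ) ≠ 0 := by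
      simp only [ne_eq, ENNReal.ofReal_eq_zero, not_le]
      exact lt_of_le_of_ne (hθ0 ξ) (Ne.symm hθξ)
    have hWtop : ENNReal.ofReal (θ ξ) ≠ ⊤ := ENNReal.ofReal_ne_top
    have hmix : mixedSearchTime t q p ξ = V :=
      ((ENNReal.mul_right_inj hW0 hWtop).1 (hEq ξ)).symm
    have hfin : searchTime t q j0 ξ ≠ ⊤ := by
      intro htop
      have hle : ENNReal.ofReal (θ ξ) * searchTime t q j0 ξ ≤ V :=
        le_trans (ENNReal.le_tsum ξ) (hθV j0)
      rw [htop, ENNReal.mul_top hW0] at hle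
      exact hV (top_le_iff.1 hle)
    exact mul_le_mul_right (key t q ht hq1 V hV p hp0 hp1 hpV hj0 ξ hmix hfin) _
  have hfinal : V + ENNReal.ofReal (t j0) ≤ V := by
    calc V + ENNReal.ofReal (t j0)
        = ∑' ξ : ℕ → Fin n, ENNReal.ofReal (θ ξ) * (V + ENNReal.ofReal (t j0)) := by
          rw [ENNReal.tsum_mul_right, hθ1, one_mul]
      _ ≤ ∑' ξ : ℕ → Fin n, ENNReal.ofReal (θ ξ) * searchTime t q j0 ξ := by
          apply ENNReal.tsum_le_tsum
          intro ξ
          by_cases hθξ : θ ξ = 0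
          · simp [hθξ]
          · exact hmain ξ hθξ
      _ ≤ V := hθV j0
  have hlt : V < V + ENNReal.ofReal (t j0) :=
    ENNReal.lt_add_right hV
      (by simp only [ne_eq, ENNReal.ofReal_eq_zero, not_le]; exact ht j0)
  exact absurd hfinal (not_le.2 hlt)
end

section
/- If σ is a permutation of {1,…,n} such that p_{σ(1)}/t_{σ(1)} ≥ p_{σ(2)}/t_{σ(2)} ≥ … ≥ p_{σ(n)}/t_{σ(n)}, then c(σ) ≤ c(τ) for every permutation τ of {1,…,n}; that is, searching the boxes in non-increasing order of p_j/t_j minimizes the expected search time. -/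
/-- with perfect detection, searching the boxes in non-increasing order of
`p_j / t_j` minimizes the expected search time
`c(σ) = Σ_j p_{σ(j)} Σ_{i ≤ j} t_{σ(i)}`. -/
theorem smiths_rule_optimal
    {n : ℕ} (t p : Fin n → ℝ) (ht : ∀ j, 0 < t j) (hp0 : ∀ j, 0 ≤ p j)
    (hp1 : ∑ j, p j = 1)
    (σ : Equiv.Perm (Fin n))
    (hσ : ∀ i j : Fin n, i ≤ j → p (σ j) / t (σ j) ≤ p (σ i) / t (σ i)) :
    ∀ τ : Equiv.Perm (Fin n),
      ∑ j : Fin n, p (σ j) * ∑ i ∈ Finset.Iic j, t (σ i) ≤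
        ∑ j : Fin n, p (τ j) * ∑ i ∈ Finset.Iic j, t (τ i) := by
  intro τ
  -- Rewrite the cost of any permutation as: diagonal term + sum over pairs a < b
  have key : ∀ ρ : Equiv.Perm (Fin n),
      ∑ j : Fin n, p (ρ j) * ∑ i ∈ Finset.Iic j, t (ρ i)
        = (∑ a : Fin n, t a * p a)
          + ∑ q ∈ Finset.univ.filter (fun q : Fin n × Fin n => q.1 < q.2),
              (if ρ.symm q.1 < ρ.symm q.2 then t q.1 * p q.2 else t q.2 * p q.1) := by
    intro ρ
    have hIic : ∀ j : Fin n, Finset.Iic j = Finset.univ.filter (· ≤ j) := by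
      intro j; ext i; simp
    calc ∑ j : Fin n, p (ρ j) * ∑ i ∈ Finset.Iic j, t (ρ i)
        = ∑ j : Fin n, ∑ i : Fin n, if i ≤ j then t (ρ i) * p (ρ j) else 0 := by
          refine Finset.sum_congr rfl fun j _ => ?_
          rw [Finset.mul_sum, hIic j, Finset.sum_filter]
          exact Finset.sum_congr rfl fun i _ => by rw [mul_comm]
      _ = ∑ q ∈ Finset.univ.filter (fun q : Fin n × Fin n => q.1 ≤ q.2),
            t (ρ q.1) * p (ρ q.2) := by
          rw [Finset.sum_filter, Fintype.sum_prod_type_right]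
      _ = ∑ q ∈ Finset.univ.filter
              (fun q : Fin n × Fin n => ρ.symm q.1 ≤ ρ.symm q.2), t q.1 * p q.2 := by
          refine Finset.sum_nbij' (fun q => (ρ q.1, ρ q.2)) (fun q => (ρ.symm q.1, ρ.symm q.2))
            ?_ ?_ ?_ ?_ ?_ <;> simp
      _ = ∑ q : Fin n × Fin n,
            ((if q.1 = q.2 then t q.1 * p q.2 else 0)
              + (if ρ.symm q.1 < ρ.symm q.2 then t q.1 * p q.2 else 0)) := by
          rw [Finset.sum_filter]
          refine Finset.sum_congr rfl fun q _ => ?_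
          have hiff : q.1 = q.2 ↔ ρ.symm q.1 = ρ.symm q.2 := by
            constructor
            · intro h; rw [h]
            · intro h; exact ρ.symm.injective h
          rcases lt_trichotomy (ρ.symm q.1) (ρ.symm q.2) with h | h | h
          · have h1 : ¬ q.1 = q.2 := fun hc => absurd (hiff.mp hc) h.ne
            simp [h, h.le, h1]
          · have h1 : q.1 = q.2 := hiff.mpr h
            simp [h1, h.le, h.not_lt]
          · have h1 : ¬ q.1 = q.2 := fun hc => absurd (hiff.mp hc) h.ne'
            simp [h.not_gt, h.not_ge, h1]
      _ = (∑ a : Fin n, t a * p a)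
          + ∑ q ∈ Finset.univ.filter (fun q : Fin n × Fin n => q.1 < q.2),
              (if ρ.symm q.1 < ρ.symm q.2 then t q.1 * p q.2 else t q.2 * p q.1) := by
          rw [Finset.sum_add_distrib]
          congr 1
          · rw [Fintype.sum_prod_type]
            simp
          · rw [← Finset.sum_filter]
            refine Finset.sum_nbij' (fun q => if q.1 < q.2 then q else q.swap)
              (fun q => if ρ.symm q.1 < ρ.symm q.2 then q else q.swap) ?_ ?_ ?_ ?_ ?_
            · intro q hq
              simp only [Finset.mem_filter, Finset.mem_univ, true_and] at hq ⊢
              by_cases h : q.1 < q.2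
              · simpa [h] using h
              · have hne : q.1 ≠ q.2 := fun hc => absurd hq (by simp [hc])
                have h2 : q.2 < q.1 := lt_of_le_of_ne (not_lt.mp h) (Ne.symm hne)
                simpa [h] using h2
            · intro q hq
              simp only [Finset.mem_filter, Finset.mem_univ, true_and] at hq ⊢
              by_cases h : ρ.symm q.1 < ρ.symm q.2
              · simpa [h] using h
              · have hne : ρ.symm q.2 ≠ ρ.symm q.1 :=
                  fun hc => absurd (ρ.symm.injective hc) hq.ne'
                have h2 : ρ.symm q.2 < ρ.symm q.1 := lt_of_le_of_ne (not_lt.mp h) hne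
                simpa [h] using h2
            · intro q hq
              simp only [Finset.mem_filter, Finset.mem_univ, true_and] at hq
              by_cases h : q.1 < q.2
              · simp [h, hq]
              · simp [h, hq.asymm]
            · intro q hq
              simp only [Finset.mem_filter, Finset.mem_univ, true_and] at hq
              by_cases h : ρ.symm q.1 < ρ.symm q.2
              · simp [h, hq]
              · simp [h, hq.asymm]
            · intro q hq
              simp only [Finset.mem_filter, Finset.mem_univ, true_and] at hq
              by_cases h : q.1 < q.2
              · simp [h, hq]
              · simp [h, hq.asymm]
  rw [key σ, key τ]
  refine add_le_add_right (Finset.sum_le_sum fun q hq => ?_) _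
  simp only [Finset.mem_filter, Finset.mem_univ, true_and] at hq
  have hσ' : ∀ a b : Fin n, σ.symm a ≤ σ.symm b → t a * p b ≤ t b * p a := by
    intro a b h
    have h2 := hσ (σ.symm a) (σ.symm b) h
    simp only [Equiv.apply_symm_apply] at h2
    rw [div_le_div_iff₀ (ht b) (ht a)] at h2
    linarith
  have hne : σ.symm q.1 ≠ σ.symm q.2 := fun hc => absurd (σ.symm.injective hc) hq.ne
  by_cases h1 : σ.symm q.1 < σ.symm q.2 <;> by_cases h2 : τ.symm q.1 < τ.symm q.2 <;>
    simp only [h1, h2, if_true, if_false]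
  · exact le_refl _
  · exact hσ' q.1 q.2 h1.le
  · exact hσ' q.2 q.1 (lt_of_le_of_ne (not_lt.mp h1) (Ne.symm hne)).le
  · exact le_refl _
end

section
/- Let t_1,…,t_n > 0. For i,m ∈ {1,…,n} let d(i,m) be the total time for the cyclic search starting at box i to reach box m inclusive: d(i,m) = Σ_{j=i}^m t_j if i ≤ m, and d(i,m) = Σ_{j=i}^n t_j + Σ_{j=1}^m t_j if i > m. Then for every m ∈ {1,…,n}: Σ_{i=1}^n (t_i / Σ_j t_j) · d(i,m) = (Σ_j t_j² + (Σ_j t_j)²) / (2 Σ_j t_j). In particular, with perfect detection the mixed Searcher strategy that starts the cyclic order at box i with probability t_i/Σ_j t_j has the same expected search time against every hiding location. -/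
/-!
Write `P i = ∑_{j < i} t j` and `T = ∑ j, t j`. The cyclic search time is
`d i m = ∑_{j ≤ m} t j - P i + [m < i] T`, so the `t`-weighted sum of `d · m` equals
`T * ∑_{j ≤ m} t j - ∑ i, t i * P i + T * ∑_{i > m} t i = T² - ∑ i, t i * P i`,
independently of `m`; and `2 ∑ i, t i * P i = T² - ∑ i, t i ^ 2` since it counts every
off-diagonal product `t i * t j` of `T²` once.
-/

open Finset

namespace Finset

variable {α M : Type*} [LinearOrder α]

section AddCommMonoid

variable [AddCommMonoid M]

theorem sum_Iio_add_sum_Icc [LocallyFiniteOrder α] [LocallyFiniteOrderBot α] {a b : α}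
    (hab : a ≤ b) (f : α → M) :
    ∑ x ∈ Iio a, f x + ∑ x ∈ Icc a b, f x = ∑ x ∈ Iic b, f x := by
  rw [← sum_union (disjoint_left.2 fun x hx hx' => (mem_Iio.1 hx).not_ge (mem_Icc.1 hx').1)]
  congr 1
  ext x
  simp only [mem_union, mem_Iio, mem_Icc, mem_Iic]
  constructor
  · rintro (hx | ⟨-, hx⟩)
    exacts [hx.le.trans hab, hx]
  · intro hx
    exact (lt_or_ge x a).imp_right fun hax => ⟨hax, hx⟩

variable [Fintype α] [LocallyFiniteOrderBot α] [LocallyFiniteOrderTop α]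

theorem sum_Iio_add_sum_Ici (a : α) (f : α → M) :
    ∑ x ∈ Iio a, f x + ∑ x ∈ Ici a, f x = ∑ x, f x := by
  rw [← filter_gt_eq_Iio, ← filter_le_eq_Ici]
  simp_rw [← not_lt]
  exact sum_filter_add_sum_filter_not univ (· < a) f

theorem sum_Iic_add_sum_Ioi (a : α) (f : α → M) :
    ∑ x ∈ Iic a, f x + ∑ x ∈ Ioi a, f x = ∑ x, f x := by
  rw [← sum_Iio_add_sum_Ici a, ← sum_Iio_add_eq_sum_Iic, ← sum_Ioi_add_eq_sum_Ici]
  abel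

end AddCommMonoid

theorem two_mul_sum_mul_sum_Iio [Fintype α] [LocallyFiniteOrderBot α] [LocallyFiniteOrderTop α]
    [CommRing M] (f : α → M) :
    2 * ∑ i, f i * ∑ j ∈ Iio i, f j = (∑ i, f i) ^ 2 - ∑ i, f i ^ 2 := by
  have upper_eq_lower : ∑ i, f i * ∑ j ∈ Ioi i, f j = ∑ i, f i * ∑ j ∈ Iio i, f j := by
    simp_rw [mul_sum]
    rw [sum_comm' (t' := univ) (s' := fun j => Iio j)]
    · simp_rw [mul_comm]
    · simp
  have split (i : α) : ∑ j, f j = ∑ j ∈ Iio i, f j + f i + ∑ j ∈ Ioi i, f j := by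
    rw [← sum_Iio_add_sum_Ici i, ← sum_Ioi_add_eq_sum_Ici]
    abel
  have square : (∑ i, f i) ^ 2 = ∑ i, f i * ∑ j ∈ Iio i, f j + ∑ i, f i ^ 2
      + ∑ i, f i * ∑ j ∈ Ioi i, f j := by
    rw [sq, sum_mul_sum]
    simp_rw [← mul_sum, ← sum_add_distrib]
    refine sum_congr rfl fun i _ => ?_
    rw [split i]
    ring
  rw [square, upper_eq_lower]
  ring

end Finset

section CyclicSearch

variable {α R : Type*} [LinearOrder α] [LocallyFiniteOrder α] [LocallyFiniteOrderBot α]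
  [LocallyFiniteOrderTop α]

def cyclicSearchTime [AddCommMonoid R] (t : α → R) (i m : α) : R :=
  if i ≤ m then ∑ j ∈ Icc i m, t j else ∑ j ∈ Ici i, t j + ∑ j ∈ Iic m, t j

variable [Fintype α]

theorem cyclicSearchTime_eq [AddCommGroup R] (t : α → R) (i m : α) :
    cyclicSearchTime t i m =
      ∑ j ∈ Iic m, t j - ∑ j ∈ Iio i, t j + if m < i then ∑ j, t j else 0 := by
  rw [cyclicSearchTime]
  split_ifs with him hmi hmi
  · exact absurd him hmi.not_ge
  · rw [← sum_Iio_add_sum_Icc him]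
    abel
  · rw [← sum_Iio_add_sum_Ici i]
    abel
  · exact absurd (lt_of_not_ge him) hmi

theorem two_mul_sum_mul_cyclicSearchTime [CommRing R] (t : α → R) (m : α) :
    2 * ∑ i, t i * cyclicSearchTime t i m = ∑ j, t j ^ 2 + (∑ j, t j) ^ 2 := by
  have tail : ∑ i, t i * (if m < i then ∑ j, t j else 0)
      = (∑ j, t j - ∑ j ∈ Iic m, t j) * ∑ j, t j := by
    simp_rw [mul_ite, mul_zero, ← sum_filter, filter_lt_eq_Ioi, ← sum_mul,
      ← sum_Iic_add_sum_Ioi m t, add_sub_cancel_left]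
  have expand : ∑ i, t i * cyclicSearchTime t i m
      = (∑ j, t j) * ∑ j ∈ Iic m, t j - ∑ i, t i * ∑ j ∈ Iio i, t j
        + ∑ i, t i * (if m < i then ∑ j, t j else 0) := by
    simp_rw [cyclicSearchTime_eq, mul_add, mul_sub, sum_add_distrib, sum_sub_distrib, sum_mul]
  rw [expand, tail, mul_add, mul_sub, two_mul_sum_mul_sum_Iio]
  ring

end CyclicSearch

theorem cyclic_searcher_strategy_equalizes_general
    {n : ℕ} (t : Fin n → ℝ)
    (d : Fin n → Fin n → ℝ)
    (hd : ∀ i m : Fin n, d i m =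
      if i ≤ m then ∑ j ∈ Finset.Icc i m, t j
      else (∑ j ∈ Finset.Ici i, t j) + ∑ j ∈ Finset.Iic m, t j) :
    ∀ m : Fin n,
      ∑ i : Fin n, (t i / ∑ j, t j) * d i m =
        ((∑ j, t j ^ 2) + (∑ j, t j) ^ 2) / (2 * ∑ j, t j) := by
  intro m
  obtain rfl : d = cyclicSearchTime t := funext fun i => funext (hd i)
  have weighted_sum :
      ∑ i, t i * cyclicSearchTime t i m = (∑ j, t j ^ 2 + (∑ j, t j) ^ 2) / 2 := by
    rw [eq_div_iff two_ne_zero, mul_comm, two_mul_sum_mul_cyclicSearchTime]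
  simp_rw [div_mul_eq_mul_div, ← sum_div, weighted_sum, div_div]

/-- with perfect detection, the mixed Searcher strategy that starts the
cyclic order at box `i` with probability `t_i / Σ_j t_j` has the same expected search
time `(Σ_j t_j² + (Σ_j t_j)²) / (2 Σ_j t_j)` against every hiding location `m`. Here
`d i m` is the total time for the cyclic search starting at box `i` to reach box `m`
inclusive. -/
theorem cyclic_searcher_strategy_equalizes
    {n : ℕ} (t : Fin n → ℝ) (ht : ∀ j, 0 < t j)
    (d : Fin n → Fin n → ℝ)
    (hd : ∀ i m : Fin n, d i m =
      if i ≤ m then ∑ j ∈ Finset.Icc i m, t j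
      else (∑ j ∈ Finset.Ici i, t j) + ∑ j ∈ Finset.Iic m, t j) :
    ∀ m : Fin n,
      ∑ i : Fin n, (t i / ∑ j, t j) * d i m =
        ((∑ j, t j ^ 2) + (∑ j, t j) ^ 2) / (2 * ∑ j, t j) :=
  cyclic_searcher_strategy_equalizes_general t d hd
end

section
/- Suppose q_j = q ∈ (0,1] for all j and let T = Σ_j t_j. For i ∈ {1,…,n}, let ξ_i be the Searcher sequence that repeatedly cycles through the boxes in the order i, i+1, …, n, 1, 2, …, i−1 forever. Then for every box m ∈ {1,…,n}: Σ_{i=1}^n (t_i/T) · u(m, ξ_i) = (1−q)T/q + (Σ_j t_j² + T²)/(2T). Consequently, the mixed Searcher strategy that plays ξ_i with probability t_i/T achieves this expected search time against every Hider pure strategy. -/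
open scoped ENNReal
open Fin.NatCast

lemma card_filter_mod (n r : ℕ) (hn : 0 < n) (hr : r < n) :
    ∀ c s, s ≤ n →
      (((Finset.range (c * n + s)).filter (fun k => k % n = r)).card)
        = c + if r < s then 1 else 0 := by
  intro c
  induction c with
  | zero =>
    intro s hs
    simp only [Nat.zero_mul, Nat.zero_add]
    have : (Finset.range s).filter (fun k => k % n = r)
        = (Finset.range s).filter (fun k => k = r) := by
      apply Finset.filter_congr
      intro k hk
      simp only [Finset.mem_range] at hk
      have : k % n = k := Nat.mod_eq_of_lt (lt_of_lt_of_le hk hs)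
      simp [this]
    rw [this, Finset.filter_eq']
    split_ifs with h1 h2 h2 <;> simp_all [Finset.mem_range] <;> omega
  | succ c ih =>
    intro s hs
    have hre : (c + 1) * n + s = n + (c * n + s) := by ring
    rw [hre, Finset.range_add, Finset.filter_union, Finset.filter_map,
      Finset.card_union_of_disjoint, Finset.card_map]
    · have h1 : (Finset.range n).filter (fun k => k % n = r) = {r} := by
        ext k
        simp only [Finset.mem_filter, Finset.mem_range, Finset.mem_singleton]
        constructor
        · rintro ⟨hk, hk2⟩; rw [← hk2]; exact (Nat.mod_eq_of_lt hk).symm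
        · rintro rfl; exact ⟨hr, Nat.mod_eq_of_lt hr⟩
      have h2 : ((Finset.range (c * n + s)).filter
          ((fun k => k % n = r) ∘ (addLeftEmbedding n)))
          = (Finset.range (c * n + s)).filter (fun k => k % n = r) := by
        apply Finset.filter_congr
        intro k _
        simp [addLeftEmbedding, Nat.add_mod_left]
      rw [h1, h2, ih s hs]
      rw [Finset.card_singleton]; omega
    · exact (Finset.disjoint_range_addLeftEmbedding _ _).mono_left (Finset.filter_subset _ _)


lemma val_sub' {n : ℕ} (u v : Fin n) :
    (u - v).val = if v.val ≤ u.val then u.val - v.val else u.val + n - v.val := by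
  have hu := u.isLt; have hv := v.isLt
  rw [Fin.sub_def]
  show (n - v.val + u.val) % n = _
  rcases le_or_gt v.val u.val with h | h
  · have h2 : n - v.val + u.val = (u.val - v.val) + n := by omega
    rw [h2, Nat.add_mod_right, if_pos h, Nat.mod_eq_of_lt (by omega)]
  · rw [Nat.mod_eq_of_lt (by omega), if_neg (by omega)]; omega

lemma looks_cyclic {n : ℕ} [NeZero n] (i m : Fin n) (c s : ℕ) (hs : s ≤ n) :
    looks (fun k => i + (k : Fin n)) m (c * n + s)
      = c + if (m - i).val < s then 1 else 0 := by
  have hn : 0 < n := n.pos_of_neZero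
  have hr : (m - i).val < n := (m - i).isLt
  unfold looks
  have hcong : (Finset.range (c * n + s)).filter (fun (k : ℕ) => i + (k : Fin n) = m)
      = (Finset.range (c * n + s)).filter (fun (k : ℕ) => k % n = (m - i).val) := by
    apply Finset.filter_congr
    intro k _
    constructor
    · intro h
      have : (k : Fin n) = m - i := by rw [← h]; abel
      rw [← this]; simp [Fin.val_natCast]
    · intro h
      have : (k : Fin n) = m - i := Fin.ext (by simp [Fin.val_natCast, h])
      rw [this]; abel
  rw [hcong]
  exact card_filter_mod n (m - i).val hn hr c s hs

lemma cond_xor {n : ℕ} [NeZero n] (m i j : Fin n) (hij : i ≠ j) :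
    ((j - i).val ≤ (m - i).val) ↔ ¬ ((i - j).val ≤ (m - j).val) := by
  have hi := i.isLt; have hj := j.isLt; have hm := m.isLt
  have h1 := val_sub' j i
  have h2 := val_sub' m i
  have h3 := val_sub' i j
  have h4 := val_sub' m j
  have hij' : i.val ≠ j.val := fun h => hij (Fin.ext h)
  split_ifs at h1 h2 h3 h4 <;> omega


lemma geom_ofReal (β A : ℝ) (hβ0 : 0 ≤ β) (hβ1 : β < 1) (hA : 0 ≤ A) :
    ∑' c : ℕ, ENNReal.ofReal (β ^ c * A) = ENNReal.ofReal (A / (1 - β)) := by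
  rw [← ENNReal.ofReal_tsum_of_nonneg (fun c => mul_nonneg (pow_nonneg hβ0 c) hA)
    ((summable_geometric_of_lt_one hβ0 hβ1).mul_right A)]
  rw [tsum_mul_right, tsum_geometric_of_lt_one hβ0 hβ1, inv_mul_eq_div]

lemma searchTime_cyclic {n : ℕ} [NeZero n] (t : Fin n → ℝ) (ht : ∀ j, 0 ≤ t j)
    (qc : ℝ) (hqc0 : 0 < qc) (hqc1 : qc ≤ 1) (i m : Fin n) :
    (∑' k : ℕ, ENNReal.ofReal
        (t (i + (k : Fin n)) * (1 - qc) ^ looks (fun k => i + (k : Fin n)) m k))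
      = ENNReal.ofReal ((1 - qc) * (∑ j, t j) / qc
          + ∑ j, if (j - i).val ≤ (m - i).val then t j else 0) := by
  set β := 1 - qc with hβ
  have hβ0 : 0 ≤ β := by rw [hβ]; linarith
  have hβ1 : β < 1 := by rw [hβ]; linarith
  set r := (m - i).val with hr
  set T := ∑ j, t j with hT
  set S := ∑ j, if (j - i).val ≤ r then t j else 0 with hS
  have hT0 : 0 ≤ T := Finset.sum_nonneg fun j _ => ht j
  have hS0 : 0 ≤ S := Finset.sum_nonneg fun j _ => by split_ifs <;> simp [ht j]
  have hA0 : 0 ≤ β * T + qc * S := by positivity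
  rw [← Equiv.tsum_eq (Nat.divModEquiv n).symm, ENNReal.tsum_prod']
  have hsum : ∀ c : ℕ,
      (∑' s : Fin n, ENNReal.ofReal
        (t (i + (((Nat.divModEquiv n).symm (c, s) : ℕ) : Fin n)) *
          β ^ looks (fun k => i + (k : Fin n)) m ((Nat.divModEquiv n).symm (c, s))))
      = ENNReal.ofReal (β ^ c * (β * T + qc * S)) := by
    intro c
    rw [tsum_fintype]
    have hterm : ∀ s : Fin n,
        (t (i + (((Nat.divModEquiv n).symm (c, s) : ℕ) : Fin n)) *
          β ^ looks (fun k => i + (k : Fin n)) m ((Nat.divModEquiv n).symm (c, s)))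
        = β ^ c * (β * t (i + s) + qc * (if s.val ≤ r then t (i + s) else 0)) := by
      intro s
      have he : ((Nat.divModEquiv n).symm (c, s) : ℕ) = c * n + s.val := rfl
      have hcast : ((c * n + s.val : ℕ) : Fin n) = s := by
        apply Fin.ext
        rw [Fin.val_natCast, Nat.add_comm, Nat.add_mul_mod_self_right, Nat.mod_eq_of_lt s.isLt]
      rw [he, hcast, looks_cyclic i m c s.val (le_of_lt s.isLt), ← hr, pow_add]
      rcases lt_or_ge r s.val with h | h
      · rw [if_pos h, if_neg (by omega), pow_one]
        ring
      · rw [if_neg (by omega), if_pos h, pow_zero]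
        rw [hβ]; ring
    rw [Finset.sum_congr rfl (fun s _ => congrArg ENNReal.ofReal (hterm s))]
    rw [← ENNReal.ofReal_sum_of_nonneg (fun s _ => mul_nonneg (pow_nonneg hβ0 c)
      (add_nonneg (mul_nonneg hβ0 (ht _))
        (mul_nonneg hqc0.le (by split_ifs <;> simp [ht (i + s)]))))]
    congr 1
    rw [← Finset.mul_sum, Finset.sum_add_distrib, ← Finset.mul_sum, ← Finset.mul_sum]
    have h1 : ∑ s : Fin n, t (i + s) = T := by
      rw [hT]; exact Fintype.sum_equiv (Equiv.addLeft i) _ _ (fun s => rfl)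
    have h2 : (∑ s : Fin n, if s.val ≤ r then t (i + s) else 0) = S := by
      rw [hS]
      apply Fintype.sum_equiv (Equiv.addLeft i)
      intro s
      have : (i + s) - i = s := by abel
      simp only [Equiv.coe_addLeft, this]
    rw [h1, h2]
  rw [tsum_congr hsum, geom_ofReal β _ hβ0 hβ1 hA0]
  congr 1
  have h1β : 1 - β = qc := by rw [hβ]; ring
  rw [h1β, add_div, mul_div_cancel_left₀ _ (ne_of_gt hqc0)]

lemma pairing {n : ℕ} [NeZero n] (t : Fin n → ℝ) (m : Fin n) :
    (∑ i : Fin n, t i * (∑ j : Fin n, if (j - i).val ≤ (m - i).val then t j else 0))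
      = ((∑ j, t j ^ 2) + (∑ j, t j) ^ 2) / 2 := by
  set F : Fin n → Fin n → ℝ :=
    fun i j => t i * (if (j - i).val ≤ (m - i).val then t j else 0) with hF
  have key : ∀ i j : Fin n, F i j + F j i
      = t i * t j + if i = j then t i * t j else 0 := by
    intro i j
    rcases eq_or_ne i j with rfl | hij
    · simp [hF, Fin.sub_self]
    · rw [if_neg hij]
      rcases (cond_xor m i j hij) with ⟨h1, h2⟩
      by_cases h : (j - i).val ≤ (m - i).val
      · simp only [hF]
        rw [if_pos h, if_neg (h1 h)]; ring
      · simp only [hF]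
        rw [if_neg h, if_pos (by by_contra hc; exact h (h2 hc))]; ring
  have hdouble : (∑ i : Fin n, ∑ j : Fin n, (F i j + F j i))
      = 2 * ∑ i : Fin n, ∑ j : Fin n, F i j := by
    rw [Finset.sum_congr rfl (fun i _ => Finset.sum_add_distrib),
      Finset.sum_add_distrib]
    rw [Finset.sum_comm (f := fun i j => F j i)]
    ring
  have hrhs : (∑ i : Fin n, ∑ j : Fin n, (t i * t j + if i = j then t i * t j else 0))
      = (∑ j, t j) ^ 2 + ∑ j, t j ^ 2 := by
    rw [Finset.sum_congr rfl (fun i _ => Finset.sum_add_distrib),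
      Finset.sum_add_distrib]
    congr 1
    · rw [sq, Finset.sum_mul_sum]
    · rw [Finset.sum_congr rfl (fun i (_ : i ∈ Finset.univ) => Finset.sum_ite_eq Finset.univ i (fun j => t i * t j))]
      simp [sq]
  have h1 : (∑ i : Fin n, ∑ j : Fin n, (F i j + F j i))
      = (∑ j, t j) ^ 2 + ∑ j, t j ^ 2 := by
    rw [Finset.sum_congr rfl (fun i _ => Finset.sum_congr rfl (fun j _ => key i j))]
    exact hrhs
  have h2 := hdouble.symm.trans h1
  have hLHS : (∑ i : Fin n, t i * (∑ j : Fin n, if (j - i).val ≤ (m - i).val then t j else 0))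
      = ∑ i : Fin n, ∑ j : Fin n, F i j := by
    apply Finset.sum_congr rfl
    intro i _
    rw [Finset.mul_sum]
  rw [hLHS]
  linarith


/-- with equal detection probabilities `q_j = qc ∈ (0,1]`, the mixed
Searcher strategy that, with probability `t_i / T`, repeatedly cycles through the boxes
in the order `i, i+1, …, n, 1, …, i−1` (the sequence `k ↦ i + k (mod n)`) achieves
expected search time exactly `(1−qc)T/qc + (Σ_j t_j² + T²)/(2T)` against every hiding
location `m`. -/
theorem cyclic_mixed_strategy_value
    {n : ℕ} [NeZero n] (t q : Fin n → ℝ) (ht : ∀ j, 0 < t j)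
    (qc : ℝ) (hq : ∀ j, q j = qc) (hqc0 : 0 < qc) (hqc1 : qc ≤ 1) :
    ∀ m : Fin n,
      ∑ i : Fin n,
          ENNReal.ofReal (t i / ∑ j, t j) * searchTime t q m (fun k => i + (k : Fin n)) =
        ENNReal.ofReal
          ((1 - qc) * (∑ j, t j) / qc +
            ((∑ j, t j ^ 2) + (∑ j, t j) ^ 2) / (2 * ∑ j, t j)) := by
  intro m
  set T := ∑ j, t j with hT
  have hT0 : 0 < T :=
    Finset.sum_pos (fun j _ => ht j) ⟨⟨0, n.pos_of_neZero⟩, Finset.mem_univ _⟩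
  set S : Fin n → ℝ := fun i => ∑ j, if (j - i).val ≤ (m - i).val then t j else 0 with hSdef
  have hS0 : ∀ i, 0 ≤ S i := fun i =>
    Finset.sum_nonneg fun j _ => by split_ifs <;> simp [(ht j).le]
  have hst : ∀ i : Fin n, searchTime t q m (fun k => i + (k : Fin n))
      = ENNReal.ofReal ((1 - qc) * T / qc + S i) := by
    intro i
    unfold searchTime
    rw [hq m]
    exact searchTime_cyclic t (fun j => (ht j).le) qc hqc0 hqc1 i m
  rw [Finset.sum_congr rfl (fun i _ => by rw [hst i])]
  have hnn : ∀ i : Fin n, 0 ≤ (1 - qc) * T / qc + S i := by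
    intro i
    have : 0 ≤ (1 - qc) * T / qc := div_nonneg (mul_nonneg (by linarith) hT0.le) hqc0.le
    linarith [hS0 i]
  rw [Finset.sum_congr rfl (fun i _ =>
    (ENNReal.ofReal_mul (div_nonneg (ht i).le hT0.le)).symm)]
  rw [← ENNReal.ofReal_sum_of_nonneg (fun i _ =>
    mul_nonneg (div_nonneg (ht i).le hT0.le) (hnn i))]
  congr 1
  have hsum1 : ∑ i, t i / T = 1 := by rw [← Finset.sum_div, ← hT, div_self hT0.ne']
  have hp : (∑ i, t i * S i) = ((∑ j, t j ^ 2) + T ^ 2) / 2 := pairing t m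
  have hterm : ∀ i : Fin n, (t i / T) * ((1 - qc) * T / qc + S i)
      = ((1 - qc) * T / qc) * (t i / T) + (t i * S i) / T := by
    intro i; ring
  rw [Finset.sum_congr rfl (fun i _ => hterm i), Finset.sum_add_distrib,
    ← Finset.mul_sum, hsum1, mul_one, ← Finset.sum_div, hp, div_div]
end

section
/- For every permutation σ of {1,…,n}: Σ_{H ⊆ {1,…,n}, |H| = k} ν(H) · u(H,σ) = t({1,…,n}) − S_{k+1}/S_k. In particular, the Hider mixed strategy ν yields expected search time exactly t(B) − S_{k+1}/S_k against every pure Searcher strategy. -/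
/-- `esym t j A = S_j(A)`: the sum over all `j`-element subsets `B` of `A` of the product
of the search times of the boxes in `B`. -/
noncomputable def esym {n : ℕ} (t : Fin n → ℝ) (j : ℕ) (A : Finset (Fin n)) : ℝ :=
  ∑ B ∈ A.powersetCard j, ∏ i ∈ B, t i

/-- `findAll t H σ = u(H,σ)`: the time to find all targets hidden at the set `H` when the
boxes are opened in the order `σ 0, σ 1, …`; a look at position `i` contributes its
search time exactly when some target is found at position `i` or later, i.e. the sum is
`Σ_{i ≤ L} t_{σ(i)}` where `L = max {i : σ i ∈ H}`. -/
noncomputable def findAll {n : ℕ} (t : Fin n → ℝ) (H : Finset (Fin n))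
    (σ : Equiv.Perm (Fin n)) : ℝ :=
  ∑ i ∈ Finset.univ.filter (fun i : Fin n => ∃ i', i ≤ i' ∧ σ i' ∈ H), t (σ i)

lemma esym_insert {n : ℕ} (t : Fin n → ℝ) (j : ℕ) (A : Finset (Fin n)) {x : Fin n}
    (hx : x ∉ A) :
    esym t (j + 1) (insert x A) = esym t (j + 1) A + t x * esym t j A := by
  unfold esym
  rw [Finset.powersetCard_succ_insert hx, Finset.sum_union, Finset.sum_image, Finset.mul_sum]
  · congr 1
    refine Finset.sum_congr rfl fun B hB => ?_
    rw [Finset.prod_insert (fun h => hx ((Finset.mem_powersetCard.mp hB).1 h))]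
  · intro B hB C hC h
    have hxB : x ∉ B := fun h' => hx ((Finset.mem_powersetCard.mp hB).1 h')
    have hxC : x ∉ C := fun h' => hx ((Finset.mem_powersetCard.mp hC).1 h')
    rw [← Finset.erase_insert hxB, ← Finset.erase_insert hxC, h]
  · rw [Finset.disjoint_left]
    intro B hB hB'
    obtain ⟨C, hC, rfl⟩ := Finset.mem_image.mp hB'
    exact hx ((Finset.mem_powersetCard.mp hB).1 (Finset.mem_insert_self x C))

lemma key_s14 {n : ℕ} (t : Fin n → ℝ) (k : ℕ) (σ : Equiv.Perm (Fin n)) :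
    ∑ i : Fin n, t (σ i) * esym t k (Finset.image σ (Finset.Iio i)) =
      esym t (k + 1) Finset.univ := by
  have gen : ∀ m : ℕ, m ≤ n →
      ∑ i ∈ Finset.univ.filter (fun i : Fin n => i.val < m),
          t (σ i) * esym t k (Finset.image σ (Finset.Iio i)) =
        esym t (k + 1) (Finset.image σ (Finset.univ.filter (fun i : Fin n => i.val < m))) := by
    intro m
    induction m with
    | zero =>
      intro _
      have : Finset.powersetCard (k + 1) (∅ : Finset (Fin n)) = ∅ := by
        rw [Finset.powersetCard_eq_empty]
        simp
      simp [esym, this]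
    | succ m ih =>
      intro hm
      have hm' : m < n := hm
      set im : Fin n := ⟨m, hm'⟩ with him
      have hfilter : (Finset.univ.filter (fun i : Fin n => i.val < m + 1)) =
          insert im (Finset.univ.filter (fun i : Fin n => i.val < m)) := by
        ext j
        simp only [Finset.mem_filter, Finset.mem_univ, true_and, Finset.mem_insert]
        constructor
        · intro h
          rcases Nat.lt_succ_iff_lt_or_eq.mp h with h | h
          · exact Or.inr h
          · exact Or.inl (Fin.ext h)
        · rintro (rfl | h)
          · exact Nat.lt_succ_self m
          · exact Nat.lt_succ_of_lt h
      have himnot : im ∉ Finset.univ.filter (fun i : Fin n => i.val < m) := by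
        simp [him]
      have hIio : Finset.Iio im = Finset.univ.filter (fun i : Fin n => i.val < m) := by
        ext j
        simp only [Finset.mem_Iio, Finset.mem_filter, Finset.mem_univ, true_and]
        exact Fin.lt_def
      rw [hfilter, Finset.sum_insert himnot, Finset.image_insert,
        esym_insert t k _ (by
          intro h
          obtain ⟨j, hj, hj'⟩ := Finset.mem_image.mp h
          have := σ.injective hj'
          exact himnot (this ▸ hj)),
        ih (le_of_lt hm), hIio]
      ring
  have h := gen n le_rfl
  have huniv : (Finset.univ.filter (fun i : Fin n => i.val < n)) = Finset.univ := by
    ext j; simp [j.isLt]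
  rw [huniv, Finset.image_univ_of_surjective σ.surjective] at h
  exact h

/-- the Hider mixed strategy `ν(H) = π(H)/S_k` over `k`-element subsets
yields expected search time exactly `t(B) − S_{k+1}/S_k` against every pure Searcher
strategy (every ordering of the boxes). -/
theorem hider_multi_target_value
    {n : ℕ} (t : Fin n → ℝ) (ht : ∀ j, 0 < t j) (k : ℕ) (hk1 : 1 ≤ k) (hkn : k ≤ n)
    (σ : Equiv.Perm (Fin n)) :
    ∑ H ∈ Finset.univ.powersetCard k,
        ((∏ i ∈ H, t i) / esym t k Finset.univ) * findAll t H σ =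
      (∑ j, t j) - esym t (k + 1) Finset.univ / esym t k Finset.univ := by
  classical
  have hSk : 0 < esym t k Finset.univ := by
    unfold esym
    apply Finset.sum_pos
    · exact fun B _ => Finset.prod_pos fun i _ => ht i
    · obtain ⟨B, hB, hcard⟩ := Finset.exists_subset_card_eq (s := (Finset.univ : Finset (Fin n)))
        (n := k) (by simpa using hkn)
      exact ⟨B, Finset.mem_powersetCard.mpr ⟨hB, hcard⟩⟩
  have main : ∑ H ∈ Finset.univ.powersetCard k, (∏ i ∈ H, t i) * findAll t H σ =
      esym t k Finset.univ * (∑ j, t j) - esym t (k + 1) Finset.univ := by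
    have step1 : ∀ H : Finset (Fin n), (∏ i ∈ H, t i) * findAll t H σ =
        ∑ i : Fin n, (if ∃ i', i ≤ i' ∧ σ i' ∈ H then (∏ j ∈ H, t j) * t (σ i) else 0) := by
      intro H
      rw [findAll, Finset.sum_filter, Finset.mul_sum]
      exact Finset.sum_congr rfl fun i _ => by rw [mul_ite, mul_zero]
    rw [Finset.sum_congr rfl fun H _ => step1 H, Finset.sum_comm]
    have inner : ∀ i : Fin n,
        ∑ H ∈ Finset.univ.powersetCard k,
            (if ∃ i', i ≤ i' ∧ σ i' ∈ H then (∏ j ∈ H, t j) * t (σ i) else 0) =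
          (esym t k Finset.univ - esym t k (Finset.image σ (Finset.Iio i))) * t (σ i) := by
      intro i
      have hiff : ∀ H : Finset (Fin n),
          (∃ i', i ≤ i' ∧ σ i' ∈ H) ↔ ¬ (H ⊆ Finset.image σ (Finset.Iio i)) := by
        intro H
        constructor
        · rintro ⟨i', hi', hmem⟩ hsub
          obtain ⟨j, hj, hj'⟩ := Finset.mem_image.mp (hsub hmem)
          have : j = i' := σ.injective hj'
          subst this
          exact absurd hi' (not_le.mpr (Finset.mem_Iio.mp hj))
        · intro h
          obtain ⟨x, hxH, hxC⟩ := Finset.not_subset.mp h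
          refine ⟨σ.symm x, ?_, by simp [hxH]⟩
          by_contra hle
          push_neg at hle
          exact hxC (Finset.mem_image.mpr ⟨σ.symm x, Finset.mem_Iio.mpr hle, by simp⟩)
      have : ∀ H ∈ Finset.univ.powersetCard k,
          (if ∃ i', i ≤ i' ∧ σ i' ∈ H then (∏ j ∈ H, t j) * t (σ i) else 0) =
            (∏ j ∈ H, t j) * t (σ i) -
              (if H ⊆ Finset.image σ (Finset.Iio i) then (∏ j ∈ H, t j) * t (σ i) else 0) := by
        intro H _
        rw [if_congr (hiff H) rfl rfl]
        split_ifs <;> ring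
      rw [Finset.sum_congr rfl this, Finset.sum_sub_distrib, sub_mul]
      congr 1
      · rw [esym, Finset.sum_mul]
      · rw [← Finset.sum_filter]
        have hset : (Finset.univ.powersetCard k).filter
            (fun H => H ⊆ Finset.image σ (Finset.Iio i)) =
            (Finset.image σ (Finset.Iio i)).powersetCard k := by
          ext H
          simp only [Finset.mem_filter, Finset.mem_powersetCard]
          constructor
          · rintro ⟨⟨-, hc⟩, hs⟩; exact ⟨hs, hc⟩
          · rintro ⟨hs, hc⟩; exact ⟨⟨Finset.subset_univ H, hc⟩, hs⟩
        rw [hset, esym, Finset.sum_mul]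
    rw [Finset.sum_congr rfl fun i _ => inner i]
    have : ∑ i : Fin n,
        (esym t k Finset.univ - esym t k (Finset.image σ (Finset.Iio i))) * t (σ i) =
        esym t k Finset.univ * (∑ i : Fin n, t (σ i)) -
          ∑ i : Fin n, t (σ i) * esym t k (Finset.image σ (Finset.Iio i)) := by
      rw [Finset.mul_sum, ← Finset.sum_sub_distrib]
      exact Finset.sum_congr rfl fun i _ => by ring
    rw [this, key_s14 t k σ, Equiv.sum_comp σ t]
  have hne : esym t k Finset.univ ≠ 0 := ne_of_gt hSk
  have lhs_eq : ∑ H ∈ Finset.univ.powersetCard k,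
      ((∏ i ∈ H, t i) / esym t k Finset.univ) * findAll t H σ =
      (∑ H ∈ Finset.univ.powersetCard k, (∏ i ∈ H, t i) * findAll t H σ) /
        esym t k Finset.univ := by
    rw [Finset.sum_div]
    exact Finset.sum_congr rfl fun H _ => by ring
  rw [lhs_eq, main, sub_div, mul_div_cancel_left₀ _ hne]
end

section
/- For all k-element subsets H and H' of {1,…,n}: ū(H', ξ_H) = ū(H, ξ_{H'}). That is, the expected time for the strategy that searches H first and then the remaining boxes in uniformly random order to find all targets hidden at H' equals the expected time for the strategy that searches H' first to find all targets hidden at H. -/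
/-- `ubar t k H' H = ū(H', ξ_H)`: the expected time, against the hiding set `H'`, of the
mixed Searcher strategy `ξ_H` that searches the `k` boxes of `H` first and then the
remaining boxes in uniformly random order: the average of `u(H',σ)` over all
`k!·(n−k)!` permutations `σ` whose first `k` values are exactly the elements of `H`. -/
noncomputable def ubar {n : ℕ} (t : Fin n → ℝ) (k : ℕ) (H' H : Finset (Fin n)) : ℝ :=
  (1 / ((Nat.factorial k : ℝ) * (Nat.factorial (n - k) : ℝ))) *
    ∑ σ ∈ Finset.univ.filter
        (fun σ : Equiv.Perm (Fin n) => ∀ i : Fin n, (i : ℕ) < k → σ i ∈ H),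
      findAll t H' σ

open Finset

section Exchange

variable {α : Type*} [DecidableEq α] {s t : Finset α}

def exchangeSdiff (g : ↥(s \ t) ≃ ↥(t \ s)) (x : α) : α :=
  if h : x ∈ s \ t then g ⟨x, h⟩ else if h' : x ∈ t \ s then g.symm ⟨x, h'⟩ else x

theorem exchangeSdiff_involutive (g : ↥(s \ t) ≃ ↥(t \ s)) :
    Function.Involutive (exchangeSdiff g) := by
  have hg (y) : (g y : α) ∈ t \ s := (g y).2
  have hg' (y) : (g.symm y : α) ∈ s \ t := (g.symm y).2
  intro x
  unfold exchangeSdiff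
  split_ifs <;> grind

theorem exchangeSdiff_mem_iff (g : ↥(s \ t) ≃ ↥(t \ s)) (x : α) :
    exchangeSdiff g x ∈ t ↔ x ∈ s := by
  have hg (y) : (g y : α) ∈ t \ s := (g y).2
  have hg' (y) : (g.symm y : α) ∈ s \ t := (g.symm y).2
  unfold exchangeSdiff
  split_ifs <;> grind

theorem exchangeSdiff_eq_self (g : ↥(s \ t) ≃ ↥(t \ s)) {x : α} (hx : x ∉ s ∪ t) :
    exchangeSdiff g x = x := by
  rw [mem_union, not_or] at hx
  simp [exchangeSdiff, hx]

theorem exists_perm_exchange (h : s.card = t.card) :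
    ∃ e : Equiv.Perm α, (∀ x, e x ∈ t ↔ x ∈ s) ∧ (∀ x, e x ∈ s ↔ x ∈ t) ∧
      {x | e x ≠ x} ⊆ ↑(s ∪ t) := by
  set g := equivOfCardEq (card_sdiff_comm h)
  have hinv := exchangeSdiff_involutive g
  refine ⟨hinv.toPerm, exchangeSdiff_mem_iff g, fun x => ?_, fun x hx => ?_⟩
  · simpa [hinv x] using (exchangeSdiff_mem_iff g (exchangeSdiff g x)).symm
  · by_contra hxst
    exact hx (exchangeSdiff_eq_self g hxst)

end Exchange

section Search

variable {n : ℕ}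

def searchedBoxes (H : Finset (Fin n)) (σ : Equiv.Perm (Fin n)) : Finset (Fin n) :=
  univ.filter fun b => ∃ c ∈ H, σ.symm b ≤ σ.symm c

theorem findAll_eq_sum_searchedBoxes (t : Fin n → ℝ) (H : Finset (Fin n))
    (σ : Equiv.Perm (Fin n)) : findAll t H σ = ∑ b ∈ searchedBoxes H σ, t b := by
  refine sum_equiv σ (fun i => ?_) fun _ _ => rfl
  simp only [searchedBoxes, mem_filter, mem_univ, true_and, Equiv.symm_apply_apply]
  exact ⟨fun ⟨i', hi', hH⟩ => ⟨σ i', hH, by simpa⟩,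
    fun ⟨c, hc, hic⟩ => ⟨σ.symm c, hic, by simpa⟩⟩

theorem findAll_perm_mul (t : Fin n → ℝ) {H H' : Finset (Fin n)} {e : Equiv.Perm (Fin n)}
    (he : ∀ x, e x ∈ H ↔ x ∈ H') (σ : Equiv.Perm (Fin n)) :
    findAll t H (e * σ) = findAll (t ∘ e) H' σ := by
  simp only [findAll, Equiv.Perm.mul_apply, he, Function.comp_apply]

theorem findAll_comp_perm (t : Fin n → ℝ) {H : Finset (Fin n)} {e σ : Equiv.Perm (Fin n)}
    (he : {x | e x ≠ x} ⊆ ↑(searchedBoxes H σ)) :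
    findAll (t ∘ e) H σ = findAll t H σ := by
  rw [findAll_eq_sum_searchedBoxes, findAll_eq_sum_searchedBoxes]
  exact e.sum_comp _ t he

theorem val_lt_of_apply_mem {k : ℕ} {H : Finset (Fin n)} {σ : Equiv.Perm (Fin n)}
    (hH : H.card = k) (hσ : ∀ i : Fin n, (i : ℕ) < k → σ i ∈ H) {i : Fin n}
    (hi : σ i ∈ H) : (i : ℕ) < k := by
  set A : Finset (Fin n) := univ.filter fun i : Fin n => (i : ℕ) < k
  have hkn : k ≤ n := by simpa [hH] using card_le_univ H
  have hA : A.card = k := by rw [Fin.card_filter_val_lt, min_eq_right hkn]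
  have hAH : A.map σ.toEmbedding = H := by
    refine eq_of_subset_of_card_le (fun b hb => ?_) (by rw [card_map, hA, hH])
    obtain ⟨j, hj, rfl⟩ := mem_map.mp hb
    exact hσ j (mem_filter.mp hj).2
  rw [← hAH] at hi
  simpa [A] using hi

theorem union_subset_searchedBoxes {k : ℕ} {H H' : Finset (Fin n)} {σ : Equiv.Perm (Fin n)}
    (hH : H.card = k) (hσ : ∀ i : Fin n, (i : ℕ) < k → σ i ∈ H) {w : Fin n}
    (hw : w ∈ H' \ H) : H ∪ H' ⊆ searchedBoxes H' σ := by
  rw [mem_sdiff] at hw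
  have hwk : k ≤ (σ.symm w : ℕ) := by
    by_contra! hlt
    exact hw.2 (by simpa using hσ _ hlt)
  intro b hb
  simp only [searchedBoxes, mem_filter, mem_univ, true_and]
  rcases mem_union.mp hb with hbH | hbH'
  · refine ⟨w, hw.1, Fin.le_def.mpr ?_⟩
    exact (val_lt_of_apply_mem hH hσ (by simpa using hbH)).le.trans hwk
  · exact ⟨b, hbH', le_rfl⟩

end Search

theorem ubar_symmetric_general
    {n : ℕ} (t : Fin n → ℝ) (k : ℕ)
    (H H' : Finset (Fin n)) (hH : H.card = k) (hH' : H'.card = k) :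
    ubar t k H' H = ubar t k H H' := by
  obtain rfl | hne := eq_or_ne H H'
  · rfl
  obtain ⟨w, hw⟩ : (H' \ H).Nonempty := sdiff_nonempty.mpr fun hsub =>
    hne (eq_of_subset_of_card_le hsub (by rw [hH, hH'])).symm
  obtain ⟨e, heH', heH, hsupp⟩ := exists_perm_exchange (hH.trans hH'.symm)
  unfold ubar
  congr 1
  refine sum_equiv (Equiv.mulLeft e) (fun σ => by simp [heH']) fun σ hσ => ?_
  rw [mem_filter] at hσ
  rw [Equiv.coe_mulLeft, findAll_perm_mul t heH,
    findAll_comp_perm t (hsupp.trans (coe_subset.mpr (union_subset_searchedBoxes hH hσ.2 hw)))]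

/-- for all `k`-element subsets `H` and `H'` of the boxes,
`ū(H', ξ_H) = ū(H, ξ_{H'})`. -/
theorem ubar_symmetric
    {n : ℕ} (t : Fin n → ℝ) (ht : ∀ j, 0 < t j) (k : ℕ) (hk1 : 1 ≤ k) (hkn : k ≤ n)
    (H H' : Finset (Fin n)) (hH : H.card = k) (hH' : H'.card = k) :
    ubar t k H' H = ubar t k H H' :=
  ubar_symmetric_general t k H H' hH hH'
end

section
/- For every k-element subset H' of {1,…,n}: Σ_{H ⊆ {1,…,n}, |H| = k} ν(H) · ū(H', ξ_H) = t({1,…,n}) − S_{k+1}/S_k. That is, the mixed Searcher strategy that chooses H with probability ν(H) and then plays ξ_H achieves expected search time exactly t(B) − S_{k+1}/S_k against every Hider pure strategy. -/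
section Aux
variable {n : ℕ}


private def permsTo (n k : ℕ) (H : Finset (Fin n)) : Finset (Equiv.Perm (Fin n)) :=
  Finset.univ.filter (fun σ : Equiv.Perm (Fin n) => ∀ i : Fin n, (i : ℕ) < k → σ i ∈ H)

lemma card_firstK (k : ℕ) (hkn : k ≤ n) :
    (Finset.univ.filter (fun i : Fin n => (i : ℕ) < k)).card = k := by
  have : (Finset.univ.filter (fun i : Fin n => (i : ℕ) < k)) =
      (Finset.range k).attachFin (fun m hm => lt_of_lt_of_le (Finset.mem_range.mp hm) hkn) := by
    ext i; simp [Finset.mem_attachFin]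
  rw [this, Finset.card_attachFin, Finset.card_range]

lemma mem_permsTo_iff {k : ℕ} (hkn : k ≤ n) {H : Finset (Fin n)} (hH : H.card = k)
    {σ : Equiv.Perm (Fin n)} (hσ : σ ∈ permsTo n k H) (i : Fin n) :
    σ i ∈ H ↔ (i : ℕ) < k := by
  simp only [permsTo, Finset.mem_filter, Finset.mem_univ, true_and] at hσ
  set K := Finset.univ.filter (fun i : Fin n => (i : ℕ) < k) with hK
  have hKcard : K.card = k := card_firstK k hkn
  have himg : K.image σ = H := by
    apply Finset.eq_of_subset_of_card_le
    · intro j hj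
      obtain ⟨i, hi, rfl⟩ := Finset.mem_image.mp hj
      exact hσ i (by simpa [hK] using hi)
    · rw [Finset.card_image_of_injective _ σ.injective, hKcard, hH]
  constructor
  · intro h
    rw [← himg, Finset.mem_image] at h
    obtain ⟨i', hi', he⟩ := h
    have : i' = i := σ.injective he
    subst this
    simpa [hK] using hi'
  · intro h
    exact hσ i h

noncomputable def Phi {k : ℕ} (H : Finset (Fin n))
    (ef : ({i : Fin n // (i : ℕ) < k} ≃ {j : Fin n // j ∈ H}) ×
          ({i : Fin n // ¬ (i : ℕ) < k} ≃ {j : Fin n // ¬ j ∈ H})) :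
    Equiv.Perm (Fin n) :=
  ((Equiv.sumCompl (fun i : Fin n => (i : ℕ) < k)).symm.trans
    ((Equiv.sumCongr ef.1 ef.2).trans (Equiv.sumCompl (fun j : Fin n => j ∈ H))))

lemma Phi_apply_pos {k : ℕ} (H : Finset (Fin n)) (ef) (i : Fin n) (h : (i : ℕ) < k) :
    Phi H ef i = (ef.1 ⟨i, h⟩ : Fin n) := by
  simp only [Phi, Equiv.trans_apply, Equiv.sumCongr_apply,
    Equiv.sumCompl_symm_apply_of_pos (p := fun i : Fin n => (i : ℕ) < k) (a := i) h, Sum.map_inl, Equiv.sumCompl_apply_inl]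

lemma Phi_apply_neg {k : ℕ} (H : Finset (Fin n)) (ef) (i : Fin n) (h : ¬ (i : ℕ) < k) :
    Phi H ef i = (ef.2 ⟨i, h⟩ : Fin n) := by
  simp only [Phi, Equiv.trans_apply, Equiv.sumCongr_apply,
    Equiv.sumCompl_symm_apply_of_neg (p := fun i : Fin n => (i : ℕ) < k) (a := i) h, Sum.map_inr, Equiv.sumCompl_apply_inr]

lemma Phi_injective {k : ℕ} (H : Finset (Fin n)) : Function.Injective (Phi (k := k) H) := by
  intro ef ef' h
  have h1 : ef.1 = ef'.1 := by
    apply Equiv.ext; intro x; apply Subtype.ext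
    have := congrArg (fun σ : Equiv.Perm (Fin n) => σ x.1) h
    simpa [Phi_apply_pos H _ _ x.2] using this
  have h2 : ef.2 = ef'.2 := by
    apply Equiv.ext; intro x; apply Subtype.ext
    have := congrArg (fun σ : Equiv.Perm (Fin n) => σ x.1) h
    simpa [Phi_apply_neg H _ _ x.2] using this
  exact Prod.ext h1 h2

lemma permsTo_eq_image {k : ℕ} (hkn : k ≤ n) {H : Finset (Fin n)} (hH : H.card = k) :
    permsTo n k H = Finset.univ.image (Phi (k := k) H) := by
  ext σ
  simp only [permsTo, Finset.mem_filter, Finset.mem_univ, true_and, Finset.mem_image]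
  constructor
  · intro hσ
    have hiff : ∀ i : Fin n, ((i : ℕ) < k) ↔ σ i ∈ H := by
      intro i
      exact (mem_permsTo_iff hkn hH
        (Finset.mem_filter.mpr ⟨Finset.mem_univ σ, hσ⟩) i).symm
    refine ⟨⟨σ.subtypeEquiv hiff, σ.subtypeEquiv (fun i => not_congr (hiff i))⟩, ?_⟩
    ext i
    by_cases h : (i : ℕ) < k
    · rw [Phi_apply_pos H _ i h]; rfl
    · rw [Phi_apply_neg H _ i h]; rfl
  · rintro ⟨ef, rfl⟩
    intro i hi
    rw [Phi_apply_pos H ef i hi]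
    exact (ef.1 ⟨i, hi⟩).2

lemma card_permsTo {k : ℕ} (hkn : k ≤ n) {H : Finset (Fin n)} (hH : H.card = k) :
    (permsTo n k H).card = Nat.factorial k * Nat.factorial (n - k) := by
  rw [permsTo_eq_image hkn hH, Finset.card_image_of_injective _ (Phi_injective H),
    Finset.card_univ]
  have c1 : Fintype.card {i : Fin n // (i : ℕ) < k} = k := by
    rw [Fintype.card_subtype]; exact card_firstK k hkn
  have c2 : Fintype.card {j : Fin n // j ∈ H} = k := by
    rw [Fintype.card_coe]; exact hH
  have c3 : Fintype.card {i : Fin n // ¬ (i : ℕ) < k} = n - k := by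
    rw [Fintype.card_subtype_compl, c1, Fintype.card_fin]
  have c4 : Fintype.card {j : Fin n // ¬ j ∈ H} = n - k := by
    rw [Fintype.card_subtype_compl, c2, Fintype.card_fin]

  rw [Fintype.card_prod, Fintype.card_equiv (Fintype.equivOfCardEq (c1.trans c2.symm)),
    Fintype.card_equiv (Fintype.equivOfCardEq (c3.trans c4.symm)), c1, c3]

noncomputable def lastOf (M : Finset (Fin n)) (j : Fin n) (σ : Equiv.Perm (Fin n)) : Fin n :=
  σ (((insert j M).image σ.symm).max'
    ((Finset.insert_nonempty j M).image σ.symm))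

lemma symm_lastOf (M : Finset (Fin n)) (j : Fin n) (σ : Equiv.Perm (Fin n)) :
    σ.symm (lastOf M j σ) = ((insert j M).image σ.symm).max'
      ((Finset.insert_nonempty j M).image σ.symm) := by
  simp [lastOf]

lemma lastOf_mem (M : Finset (Fin n)) (j : Fin n) (σ : Equiv.Perm (Fin n)) :
    lastOf M j σ ∈ insert j M := by
  have := Finset.max'_mem _ (((Finset.insert_nonempty j M).image σ.symm))
  obtain ⟨y, hy, he⟩ := Finset.mem_image.mp this
  rw [lastOf, ← he, Equiv.apply_symm_apply]
  exact hy

lemma le_lastOf (M : Finset (Fin n)) (j : Fin n) (σ : Equiv.Perm (Fin n))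
    {y : Fin n} (hy : y ∈ insert j M) :
    σ.symm y ≤ σ.symm (lastOf M j σ) := by
  rw [symm_lastOf]
  exact Finset.le_max' _ _ (Finset.mem_image_of_mem _ hy)

lemma lastOf_eq_iff (M : Finset (Fin n)) (j : Fin n) (σ : Equiv.Perm (Fin n))
    {x : Fin n} (hx : x ∈ insert j M) :
    lastOf M j σ = x ↔ ∀ y ∈ insert j M, σ.symm y ≤ σ.symm x := by
  constructor
  · rintro rfl y hy
    exact le_lastOf M j σ hy
  · intro hall
    have h1 : σ.symm (lastOf M j σ) ≤ σ.symm x := hall _ (lastOf_mem M j σ)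
    have h2 : σ.symm x ≤ σ.symm (lastOf M j σ) := le_lastOf M j σ hx
    exact σ.symm.injective (le_antisymm h1 h2)

lemma swap_mem_insert {M : Finset (Fin n)} {j x y : Fin n} (hx : x ∈ insert j M)
    (hy : y ∈ insert j M) : Equiv.swap j x y ∈ insert j M := by
  rcases eq_or_ne y j with rfl | hyj
  · rwa [Equiv.swap_apply_left]
  · rcases eq_or_ne y x with rfl | hyx
    · rw [Equiv.swap_apply_right]; exact Finset.mem_insert_self j M
    · rwa [Equiv.swap_apply_of_ne_of_ne hyj hyx]

lemma symm_swap_mul (j x y : Fin n) (σ : Equiv.Perm (Fin n)) :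
    (Equiv.swap j x * σ).symm y = σ.symm (Equiv.swap j x y) := by
  simp [Equiv.Perm.mul_def, Equiv.symm_trans_apply]

lemma lastOf_swap_mul {M : Finset (Fin n)} {j x : Fin n} (hx : x ∈ insert j M)
    (σ : Equiv.Perm (Fin n)) :
    lastOf M j (Equiv.swap j x * σ) = Equiv.swap j x (lastOf M j σ) := by
  rw [lastOf_eq_iff M j _ (swap_mem_insert hx (lastOf_mem M j σ))]
  intro y hy
  rw [symm_swap_mul, symm_swap_mul, Equiv.swap_apply_self]
  exact le_lastOf M j σ (swap_mem_insert hx hy)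

lemma swap_mul_mem_permsTo {k : ℕ} {H : Finset (Fin n)} {j x : Fin n}
    (hj : j ∉ H) (hx : x ∉ H) {σ : Equiv.Perm (Fin n)} (hσ : σ ∈ permsTo n k H) :
    Equiv.swap j x * σ ∈ permsTo n k H := by
  simp only [permsTo, Finset.mem_filter, Finset.mem_univ, true_and] at hσ ⊢
  intro i hi
  have hm := hσ i hi
  rw [Equiv.Perm.mul_apply, Equiv.swap_apply_of_ne_of_ne
    (by rintro rfl; exact hj hm) (by rintro rfl; exact hx hm)]
  exact hm

lemma count_last {k : ℕ} (hkn : k ≤ n) {H H' : Finset (Fin n)}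
    (hH : H.card = k) (hH' : H'.card = k) {j : Fin n} (hj : j ∉ H ∪ H') :
    ((H' \ H).card + 1) *
      ((permsTo n k H).filter (fun σ => lastOf (H' \ H) j σ = j)).card
    = (permsTo n k H).card := by
  classical
  set M := H' \ H with hM
  have hjH : j ∉ H := fun h => hj (Finset.mem_union_left _ h)
  have hjH' : j ∉ H' := fun h => hj (Finset.mem_union_right _ h)
  have hjM : j ∉ M := fun h => hjH' (Finset.mem_sdiff.mp h).1
  set S := permsTo n k H with hS
  have hfib : S.card = ∑ x ∈ insert j M, (S.filter (fun σ => lastOf M j σ = x)).card :=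
    Finset.card_eq_sum_card_fiberwise (fun σ _ => lastOf_mem M j σ)
  have heq : ∀ x ∈ insert j M,
      (S.filter (fun σ => lastOf M j σ = x)).card =
      (S.filter (fun σ => lastOf M j σ = j)).card := by
    intro x hx
    rcases Finset.mem_insert.mp hx with rfl | hxM
    · rfl
    · have hxH : x ∉ H := (Finset.mem_sdiff.mp hxM).2
      apply Finset.card_bij' (fun σ _ => Equiv.swap j x * σ) (fun σ _ => Equiv.swap j x * σ)
      · intro σ hσ
        simp only [Finset.mem_filter] at hσ ⊢
        refine ⟨swap_mul_mem_permsTo hjH hxH hσ.1, ?_⟩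
        rw [lastOf_swap_mul hx, hσ.2, Equiv.swap_apply_right]
      · intro σ hσ
        simp only [Finset.mem_filter] at hσ ⊢
        refine ⟨swap_mul_mem_permsTo hjH hxH hσ.1, ?_⟩
        rw [lastOf_swap_mul hx, hσ.2, Equiv.swap_apply_left]
      · intro σ _
        rw [← mul_assoc, Equiv.swap_mul_self, one_mul]
      · intro σ _
        rw [← mul_assoc, Equiv.swap_mul_self, one_mul]
  rw [hfib, Finset.sum_congr rfl heq, Finset.sum_const, smul_eq_mul,
    Finset.card_insert_of_notMem hjM]

lemma not_exists_iff_lastOf {k : ℕ} (hkn : k ≤ n) {H H' : Finset (Fin n)}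
    (hH : H.card = k) {j : Fin n} (hj : j ∉ H ∪ H') {σ : Equiv.Perm (Fin n)}
    (hσ : σ ∈ permsTo n k H) :
    (¬ ∃ h ∈ H', σ.symm j ≤ σ.symm h) ↔ lastOf (H' \ H) j σ = j := by
  have hjH : j ∉ H := fun h => hj (Finset.mem_union_left _ h)
  have hjH' : j ∉ H' := fun h => hj (Finset.mem_union_right _ h)
  have key : ∀ y : Fin n, y ∈ H ↔ ((σ.symm y : ℕ) < k) := by
    intro y
    have := mem_permsTo_iff hkn hH hσ (σ.symm y)
    rwa [Equiv.apply_symm_apply] at this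
  have hjk : ¬ ((σ.symm j : ℕ) < k) := fun h => hjH ((key j).mpr h)
  constructor
  · intro hne
    push_neg at hne
    rw [lastOf_eq_iff _ _ _ (Finset.mem_insert_self j _)]
    intro y hy
    rcases Finset.mem_insert.mp hy with rfl | hyM
    · exact le_refl _
    · exact le_of_lt (hne y (Finset.mem_sdiff.mp hyM).1)
  · intro hlast
    rintro ⟨h, hh, hle⟩
    by_cases hhH : h ∈ H
    · have h1 : (σ.symm h : ℕ) < k := (key h).mp hhH
      have h2 : (σ.symm j : ℕ) ≤ (σ.symm h : ℕ) := hle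
      omega
    · have hhM : h ∈ insert j (H' \ H) :=
        Finset.mem_insert_of_mem (Finset.mem_sdiff.mpr ⟨hh, hhH⟩)
      have hle2 : σ.symm h ≤ σ.symm j := by
        rw [lastOf_eq_iff _ _ _ (Finset.mem_insert_self j _)] at hlast
        exact hlast h hhM
      have : h = j := σ.symm.injective (le_antisymm hle2 hle)
      exact hjH' (this ▸ hh)



lemma findAll_eq (t : Fin n → ℝ) (H' : Finset (Fin n)) (σ : Equiv.Perm (Fin n)) :
    findAll t H' σ =
      ∑ j : Fin n, if ∃ h ∈ H', σ.symm j ≤ σ.symm h then t j else 0 := by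
  rw [findAll, Finset.sum_filter,
    ← Equiv.sum_comp σ (fun j => if ∃ h ∈ H', σ.symm j ≤ σ.symm h then t j else 0)]
  apply Finset.sum_congr rfl
  intro i _
  have hiff : (∃ i', i ≤ i' ∧ σ i' ∈ H') ↔ (∃ h ∈ H', σ.symm (σ i) ≤ σ.symm h) := by
    rw [Equiv.symm_apply_apply]
    constructor
    · rintro ⟨i', h1, h2⟩
      exact ⟨σ i', h2, by simpa using h1⟩
    · rintro ⟨h, hh, hle⟩
      exact ⟨σ.symm h, hle, by simp [hh]⟩
  exact if_congr hiff rfl rfl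

lemma filter_exists_eq_self {k : ℕ} (hkn : k ≤ n) {H H' : Finset (Fin n)}
    (hH : H.card = k) (hH' : H'.card = k) {j : Fin n} (hj : j ∈ H ∪ H') :
    ((permsTo n k H).filter (fun σ => ∃ h ∈ H', σ.symm j ≤ σ.symm h)) = permsTo n k H := by
  apply Finset.filter_true_of_mem
  intro σ hσ
  have key : ∀ y : Fin n, y ∈ H ↔ ((σ.symm y : ℕ) < k) := by
    intro y
    have := mem_permsTo_iff hkn hH hσ (σ.symm y)
    rwa [Equiv.apply_symm_apply] at this
  by_cases hj' : j ∈ H'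
  · exact ⟨j, hj', le_refl _⟩
  · have hjH : j ∈ H := by
      rcases Finset.mem_union.mp hj with h | h
      · exact h
      · exact absurd h hj'
    have hne : (H' \ H).Nonempty := by
      rw [Finset.sdiff_nonempty]
      intro hsub
      have : H' = H := Finset.eq_of_subset_of_card_le hsub (by omega)
      exact hj' (this ▸ hjH)
    obtain ⟨h₀, hh₀⟩ := hne
    obtain ⟨hh₀H', hh₀H⟩ := Finset.mem_sdiff.mp hh₀
    refine ⟨h₀, hh₀H', ?_⟩
    have h1 : (σ.symm j : ℕ) < k := (key j).mp hjH
    have h2 : ¬ ((σ.symm h₀ : ℕ) < k) := fun h => hh₀H ((key h₀).mpr h)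
    rw [Fin.le_def]
    omega

lemma card_filter_exists {k : ℕ} (hkn : k ≤ n) {H H' : Finset (Fin n)}
    (hH : H.card = k) (hH' : H'.card = k) {j : Fin n} (hj : j ∉ H ∪ H') :
    (((permsTo n k H).filter (fun σ => ∃ h ∈ H', σ.symm j ≤ σ.symm h)).card : ℝ) =
      (k.factorial * (n - k).factorial : ℝ) -
      (k.factorial * (n - k).factorial : ℝ) / (((H' \ H).card : ℝ) + 1) := by
  classical
  set S := permsTo n k H with hS
  have hSc : S.card = k.factorial * (n - k).factorial := card_permsTo hkn hH
  have hsplit :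
      (S.filter (fun σ => ∃ h ∈ H', σ.symm j ≤ σ.symm h)).card +
      (S.filter (fun σ => ¬ ∃ h ∈ H', σ.symm j ≤ σ.symm h)).card = S.card :=
    Finset.card_filter_add_card_filter_not _
  have hneg : (S.filter (fun σ => ¬ ∃ h ∈ H', σ.symm j ≤ σ.symm h)) =
      (S.filter (fun σ => lastOf (H' \ H) j σ = j)) := by
    apply Finset.filter_congr
    intro σ hσ
    exact not_exists_iff_lastOf hkn hH hj hσ
  have hcount := count_last hkn hH hH' hj
  rw [hneg] at hsplit
  set c := (S.filter (fun σ => lastOf (H' \ H) j σ = j)).card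
  set a := (S.filter (fun σ => ∃ h ∈ H', σ.symm j ≤ σ.symm h)).card
  have hm1 : (((H' \ H).card : ℝ) + 1) ≠ 0 := by positivity
  have hnat : ((H' \ H).card + 1) * c = k.factorial * (n - k).factorial := by
    rw [hcount]; exact hSc
  have hc : (c : ℝ) = (k.factorial * (n - k).factorial : ℝ) / (((H' \ H).card : ℝ) + 1) := by
    rw [eq_div_iff hm1]
    have h2 := congrArg (Nat.cast : ℕ → ℝ) hnat
    push_cast at h2
    linarith
  have ha : (a : ℝ) = (k.factorial * (n - k).factorial : ℝ) - (c : ℝ) := by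
    have h3 : a + c = k.factorial * (n - k).factorial := by rw [hsplit]; exact hSc
    have h4 := congrArg (Nat.cast : ℕ → ℝ) h3
    push_cast at h4
    linarith
  rw [ha, hc]

lemma ubar_eq {k : ℕ} (hkn : k ≤ n) {H H' : Finset (Fin n)}
    (hH : H.card = k) (hH' : H'.card = k) (t : Fin n → ℝ) :
    ubar t k H' H =
      (∑ j, t j) - (∑ j ∈ (H ∪ H')ᶜ, t j) / (((H' \ H).card : ℝ) + 1) := by
  classical
  have hF : ((k.factorial * (n - k).factorial : ℕ) : ℝ) ≠ 0 := by
    positivity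
  rw [ubar]
  have hsum : ∑ σ ∈ permsTo n k H, findAll t H' σ =
      (k.factorial * (n - k).factorial : ℝ) *
        ((∑ j, t j) - (∑ j ∈ (H ∪ H')ᶜ, t j) / (((H' \ H).card : ℝ) + 1)) := by
    calc ∑ σ ∈ permsTo n k H, findAll t H' σ
        = ∑ σ ∈ permsTo n k H, ∑ j : Fin n,
            if ∃ h ∈ H', σ.symm j ≤ σ.symm h then t j else 0 := by
          exact Finset.sum_congr rfl (fun σ _ => findAll_eq t H' σ)
      _ = ∑ j : Fin n, ∑ σ ∈ permsTo n k H,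
            if ∃ h ∈ H', σ.symm j ≤ σ.symm h then t j else 0 := Finset.sum_comm
      _ = ∑ j : Fin n,
            (((permsTo n k H).filter (fun σ => ∃ h ∈ H', σ.symm j ≤ σ.symm h)).card : ℝ)
              * t j := by
          apply Finset.sum_congr rfl
          intro j _
          rw [← Finset.sum_filter, Finset.sum_const, nsmul_eq_mul]
      _ = (k.factorial * (n - k).factorial : ℝ) *
            ((∑ j, t j) - (∑ j ∈ (H ∪ H')ᶜ, t j) / (((H' \ H).card : ℝ) + 1)) := by
          rw [← Finset.sum_add_sum_compl (H ∪ H')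
            (fun j => (((permsTo n k H).filter
              (fun σ => ∃ h ∈ H', σ.symm j ≤ σ.symm h)).card : ℝ) * t j),
            ← Finset.sum_add_sum_compl (H ∪ H') t]
          have e1 : ∀ j ∈ H ∪ H',
              (((permsTo n k H).filter (fun σ => ∃ h ∈ H', σ.symm j ≤ σ.symm h)).card : ℝ)
                * t j = (k.factorial * (n - k).factorial : ℝ) * t j := by
            intro j hj
            rw [filter_exists_eq_self hkn hH hH' hj, card_permsTo hkn hH]
            push_cast
            ring
          have e2 : ∀ j ∈ (H ∪ H')ᶜ,
              (((permsTo n k H).filter (fun σ => ∃ h ∈ H', σ.symm j ≤ σ.symm h)).card : ℝ)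
                * t j = ((k.factorial * (n - k).factorial : ℝ) -
                  (k.factorial * (n - k).factorial : ℝ) / (((H' \ H).card : ℝ) + 1)) * t j := by
            intro j hj
            rw [card_filter_exists hkn hH hH' (by simpa using hj)]
          rw [Finset.sum_congr rfl e1, Finset.sum_congr rfl e2,
            ← Finset.mul_sum, ← Finset.mul_sum]
          ring
  have hdef : Finset.univ.filter
      (fun σ : Equiv.Perm (Fin n) => ∀ i : Fin n, (i : ℕ) < k → σ i ∈ H) = permsTo n k H := rfl
  have hF' : ((k.factorial : ℝ) * ((n - k).factorial : ℝ)) ≠ 0 := by positivity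
  rw [hdef, hsum, ← mul_assoc, one_div, inv_mul_cancel₀ hF', one_mul]


lemma key_identity (t : Fin n → ℝ) (k : ℕ) {H' : Finset (Fin n)} (hH' : H'.card = k) :
    ∑ H ∈ Finset.univ.powersetCard k,
      (∏ i ∈ H, t i) * ((∑ j ∈ (H ∪ H')ᶜ, t j) / (((H' \ H).card : ℝ) + 1))
    = esym t (k + 1) Finset.univ := by
  classical
  have step1 : ∀ H : Finset (Fin n),
      (∏ i ∈ H, t i) * ((∑ j ∈ (H ∪ H')ᶜ, t j) / (((H' \ H).card : ℝ) + 1)) =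
      ∑ j ∈ (H ∪ H')ᶜ, (∏ i ∈ H, t i) * t j / (((H' \ H).card : ℝ) + 1) := by
    intro H
    rw [Finset.sum_div, Finset.mul_sum]
    apply Finset.sum_congr rfl
    intro j _
    ring
  rw [Finset.sum_congr rfl (fun H _ => step1 H)]
  rw [← Finset.sum_sigma (Finset.univ.powersetCard k) (fun H => (H ∪ H')ᶜ)
    (fun p => (∏ i ∈ p.1, t i) * t p.2 / (((H' \ p.1).card : ℝ) + 1))]
  have main : ∑ p ∈ (Finset.univ.powersetCard k).sigma (fun H => (H ∪ H')ᶜ),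
      (∏ i ∈ p.1, t i) * t p.2 / (((H' \ p.1).card : ℝ) + 1) =
    ∑ q ∈ (Finset.univ.powersetCard (k+1)).sigma (fun A => A \ H'),
      (∏ i ∈ q.1, t i) / (((H' \ q.1).card : ℝ) + 1) := by
    apply Finset.sum_nbij' (i := fun p => ⟨insert p.2 p.1, p.2⟩)
      (j := fun q => ⟨q.1.erase q.2, q.2⟩)
    · rintro ⟨H, j⟩ hp
      simp only [Finset.mem_sigma, Finset.mem_powersetCard_univ] at hp ⊢
      obtain ⟨hHk, hj⟩ := hp
      rw [Finset.mem_compl, Finset.mem_union, not_or] at hj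
      refine ⟨by rw [Finset.card_insert_of_notMem hj.1, hHk], ?_⟩
      exact Finset.mem_sdiff.mpr ⟨Finset.mem_insert_self _ _, hj.2⟩
    · rintro ⟨A, j⟩ hq
      simp only [Finset.mem_sigma, Finset.mem_powersetCard_univ] at hq ⊢
      obtain ⟨hAk, hj⟩ := hq
      obtain ⟨hjA, hjH'⟩ := Finset.mem_sdiff.mp hj
      refine ⟨by rw [Finset.card_erase_of_mem hjA, hAk]; rfl, ?_⟩
      rw [Finset.mem_compl, Finset.mem_union, not_or]
      exact ⟨Finset.notMem_erase _ _, hjH'⟩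
    · rintro ⟨H, j⟩ hp
      simp only [Finset.mem_sigma, Finset.mem_powersetCard_univ] at hp
      obtain ⟨hHk, hj⟩ := hp
      rw [Finset.mem_compl, Finset.mem_union, not_or] at hj
      simp only [Sigma.mk.inj_iff, heq_eq_eq]
      exact ⟨Finset.erase_insert hj.1, trivial⟩
    · rintro ⟨A, j⟩ hq
      simp only [Finset.mem_sigma, Finset.mem_powersetCard_univ] at hq
      obtain ⟨hAk, hj⟩ := hq
      simp only [Sigma.mk.inj_iff, heq_eq_eq]
      exact ⟨Finset.insert_erase (Finset.mem_sdiff.mp hj).1, trivial⟩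
    · rintro ⟨H, j⟩ hp
      simp only [Finset.mem_sigma, Finset.mem_powersetCard_univ] at hp
      obtain ⟨hHk, hj⟩ := hp
      rw [Finset.mem_compl, Finset.mem_union, not_or] at hj
      have h1 : ∏ i ∈ insert j H, t i = t j * ∏ i ∈ H, t i :=
        Finset.prod_insert hj.1
      have h2 : H' \ insert j H = H' \ H := by
        ext y
        simp only [Finset.mem_sdiff, Finset.mem_insert, not_or]
        constructor
        · rintro ⟨hy, -, hyH⟩; exact ⟨hy, hyH⟩
        · rintro ⟨hy, hyH⟩
          exact ⟨hy, fun h => hj.2 (h ▸ hy), hyH⟩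
      simp only [h1, h2]
      ring
  rw [main]
  rw [Finset.sum_sigma]
  rw [esym]
  apply Finset.sum_congr rfl
  intro A hA
  have hAk : A.card = k + 1 := Finset.mem_powersetCard_univ.mp hA
  have hcard : (A \ H').card = (H' \ A).card + 1 := by
    have c1 := Finset.card_sdiff_add_card_inter A H'
    have c2 := Finset.card_sdiff_add_card_inter H' A
    rw [Finset.inter_comm] at c2
    omega
  simp only
  rw [Finset.sum_const, hcard, nsmul_eq_mul]
  have hd : ((H' \ A).card : ℝ) + 1 ≠ 0 := by positivity
  push_cast
  field_simp

end Aux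

/-- the mixed Searcher strategy that chooses the `k`-element set `H` with
probability `ν(H) = π(H)/S_k` and then plays `ξ_H` achieves expected search time exactly
`t(B) − S_{k+1}/S_k` against every Hider pure strategy `H'`. -/
theorem searcher_multi_target_value
    {n : ℕ} (t : Fin n → ℝ) (ht : ∀ j, 0 < t j) (k : ℕ) (hk1 : 1 ≤ k) (hkn : k ≤ n)
    (H' : Finset (Fin n)) (hH' : H'.card = k) :
    ∑ H ∈ Finset.univ.powersetCard k,
        ((∏ i ∈ H, t i) / esym t k Finset.univ) * ubar t k H' H =
      (∑ j, t j) - esym t (k + 1) Finset.univ / esym t k Finset.univ := by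
  classical
  have hSk_pos : 0 < esym t k Finset.univ := by
    apply Finset.sum_pos
    · intro B hB
      exact Finset.prod_pos (fun i _ => ht i)
    · exact Finset.powersetCard_nonempty.mpr (by simpa using hkn)
  have hSk_ne : esym t k Finset.univ ≠ 0 := ne_of_gt hSk_pos
  have e1 : ∀ H ∈ Finset.univ.powersetCard k,
      ((∏ i ∈ H, t i) / esym t k Finset.univ) * ubar t k H' H =
      ((∏ i ∈ H, t i) * (∑ j, t j)) / esym t k Finset.univ -
        ((∏ i ∈ H, t i) * ((∑ j ∈ (H ∪ H')ᶜ, t j) / (((H' \ H).card : ℝ) + 1))) /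
          esym t k Finset.univ := by
    intro H hH
    rw [ubar_eq hkn (Finset.mem_powersetCard_univ.mp hH) hH' t]
    ring
  rw [Finset.sum_congr rfl e1, Finset.sum_sub_distrib, ← Finset.sum_div, ← Finset.sum_div,
    ← Finset.sum_mul, key_identity t k hH']
  have hesym : ∑ H ∈ Finset.univ.powersetCard k, ∏ i ∈ H, t i = esym t k Finset.univ := rfl
  rw [hesym, mul_comm, mul_div_assoc, div_self hSk_ne, mul_one]
end

section
/- Let A ⊆ {1,…,n} with |A| = j ≤ k. Then for every k-element subset H of {1,…,n} with A ⊆ H: ν(H) / (Σ_{H' : A ⊆ H', |H'| = k} ν(H')) = π(H∖A) / S_{k−j}({1,…,n}∖A). That is, conditional on the hiding set containing A, the distribution of the remaining k−j targets over {1,…,n}∖A is exactly the strategy ν for k−j targets in the boxes {1,…,n}∖A. -/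
lemma esym_pos {n : ℕ} (t : Fin n → ℝ) (ht : ∀ i, 0 < t i) (j : ℕ) (A : Finset (Fin n))
    (hj : j ≤ A.card) : 0 < esym t j A := by
  apply Finset.sum_pos
  · intro B hB
    exact Finset.prod_pos (fun i _ => ht i)
  · exact Finset.powersetCard_nonempty.mpr hj

lemma key_sum {n : ℕ} (t : Fin n → ℝ) (k : ℕ)
    (A : Finset (Fin n)) (hjk : A.card ≤ k) :
    ∑ H' ∈ (Finset.univ.powersetCard k).filter (fun H' => A ⊆ H'), ∏ i ∈ H', t i
      = (∏ i ∈ A, t i) * esym t (k - A.card) (Finset.univ \ A) := by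
  rw [esym, Finset.mul_sum]
  apply Finset.sum_nbij' (i := fun H' => H' \ A) (j := fun B => B ∪ A)
  · intro H' hH'
    simp only [Finset.mem_filter, Finset.mem_powersetCard] at hH'
    rw [Finset.mem_powersetCard]
    constructor
    · exact Finset.sdiff_subset_sdiff (Finset.subset_univ _) le_rfl
    · rw [Finset.card_sdiff_of_subset hH'.2, hH'.1.2]
  · intro B hB
    rw [Finset.mem_powersetCard] at hB
    simp only [Finset.mem_filter, Finset.mem_powersetCard]
    have hdisj : Disjoint B A := Finset.sdiff_disjoint.mono_left hB.1
    refine ⟨⟨Finset.subset_univ _, ?_⟩, Finset.subset_union_right⟩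
    rw [Finset.card_union_of_disjoint hdisj, hB.2]
    omega
  · intro H' hH'
    simp only [Finset.mem_filter, Finset.mem_powersetCard] at hH'
    exact Finset.sdiff_union_of_subset hH'.2
  · intro B hB
    rw [Finset.mem_powersetCard] at hB
    have hdisj : Disjoint B A := Finset.sdiff_disjoint.mono_left hB.1
    exact Finset.union_sdiff_cancel_right hdisj
  · intro H' hH'
    simp only [Finset.mem_filter, Finset.mem_powersetCard] at hH'
    rw [← Finset.prod_sdiff hH'.2, mul_comm]

theorem nu_conditional_still_nu
    {n : ℕ} (t : Fin n → ℝ) (ht : ∀ i, 0 < t i) (k : ℕ) (hk1 : 1 ≤ k) (hkn : k ≤ n)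
    (j : ℕ) (A : Finset (Fin n)) (hA : A.card = j) (hjk : j ≤ k)
    (H : Finset (Fin n)) (hH : H.card = k) (hAH : A ⊆ H) :
    ((∏ i ∈ H, t i) / esym t k Finset.univ) /
        (∑ H' ∈ (Finset.univ.powersetCard k).filter (fun H' => A ⊆ H'),
          (∏ i ∈ H', t i) / esym t k Finset.univ) =
      (∏ i ∈ H \ A, t i) / esym t (k - j) (Finset.univ \ A) := by
  have hSk : 0 < esym t k Finset.univ := by
    apply esym_pos t ht
    simpa using hkn
  have hπA : 0 < ∏ i ∈ A, t i := Finset.prod_pos (fun i _ => ht i)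
  have hsum := key_sum t k A (hA ▸ hjk)
  rw [← Finset.sum_div, hsum, hA]
  have hE : 0 < esym t (k - j) (Finset.univ \ A) := by
    apply esym_pos t ht
    have : (Finset.univ \ A).card = n - j := by
      rw [Finset.card_sdiff_of_subset (Finset.subset_univ A), hA]
      simp
    omega
  rw [← Finset.prod_sdiff hAH]
  field_simp
end
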